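/- arXiv:2408.16207 — 7 statements merged into one kernel-verified Lean document; each statement's English description precedes it below -/
import Mathlib

section
/- Let G be a finite abelian group of odd order n. Then there exist n complete mappings σ_0, σ_1, …, σ_{n-1} of G that are pairwise disjoint, i.e., σ_j(g) ≠ σ_k(g) for all g ∈ G whenever j ≠ k; moreover, at least φ(n) of these complete mappings are cyclic permutations of G (where φ is Euler's totient function). -/
/-!
By the structure theorem, `G` is built from the trivial group by adjoining cyclic factors `ZMod n`
of odd prime-power order, one at a time. Given pairwise disjoint complete mappings `σ i`
(`i ∈ A`) of a group `A` of order `m`, the maps `(a, c) ↦ (σ i a, c + b + [a = 0])`, indexed by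
`(i, b) ∈ A × ZMod n`, are pairwise disjoint complete mappings of `A × ZMod n`: completeness only
needs doubling to be bijective on `ZMod n`. If `σ i` is cyclic, then `m` steps of the new map
return to the same point of `A` and advance the second coordinate by `m b + 1`, so the new map is
cyclic as soon as `m b + 1` is a unit. For `n = p ^ e` this holds for every `b` when `p ∣ m`, and
for `φ n` values of `b` when `p ∤ m`; either way `φ (m n)` cyclic maps are obtained.
-/

open Equiv Function Finset
open scoped Nat

section

variable {α β A G H N : Type*}

def IsCompleteMapping [AddCommGroup G] (σ : Perm G) : Prop :=
  Bijective fun g => g + σ g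

def IsCyclicPerm (σ : Perm α) : Prop :=
  ∀ x y, ∃ k : ℕ, (σ ^ k) x = y

def HasDisjointCompleteMappings (G : Type*) [AddCommGroup G] : Prop :=
  ∃ σ : G → Perm G, (∀ i, IsCompleteMapping (σ i)) ∧
    Pairwise (fun i j => ∀ g, σ i g ≠ σ j g) ∧
    ∃ S : Finset G, φ (Nat.card G) ≤ #S ∧ ∀ i ∈ S, IsCyclicPerm (σ i)

namespace IsCyclicPerm

theorem permCongr {σ : Perm α} (hσ : IsCyclicPerm σ) (e : α ≃ β) :
    IsCyclicPerm (e.permCongr σ) := by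
  intro x y
  obtain ⟨k, hk⟩ := hσ (e.symm x) (e.symm y)
  refine ⟨k, ?_⟩
  rw [← permCongrHom_coe, ← map_pow, permCongrHom_coe, permCongr_apply, hk, apply_symm_apply]

variable [Fintype α] {σ : Perm α}

theorem exists_lt_minimalPeriod_iterate_eq (hσ : IsCyclicPerm σ) (x y : α) :
    ∃ k < minimalPeriod σ x, σ^[k] x = y := by
  obtain ⟨k, rfl⟩ := hσ x y
  have hpos : 0 < minimalPeriod σ x :=
    minimalPeriod_pos_of_mem_periodicPts (σ.injective.mem_periodicPts x)
  exact ⟨k % minimalPeriod σ x, Nat.mod_lt _ hpos, by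
    rw [iterate_mod_minimalPeriod_eq, Perm.iterate_eq_pow]⟩

theorem minimalPeriod_eq_card (hσ : IsCyclicPerm σ) (x : α) :
    minimalPeriod σ x = Fintype.card α := by
  classical
  refine minimalPeriod_le_card.antisymm ?_
  calc Fintype.card α = #(univ : Finset α) := rfl
    _ ≤ #((range (minimalPeriod σ x)).image fun k => σ^[k] x) := by
        refine card_le_card fun y _ => ?_
        obtain ⟨k, hk, rfl⟩ := hσ.exists_lt_minimalPeriod_iterate_eq x y
        exact mem_image_of_mem _ (mem_range.mpr hk)
    _ ≤ minimalPeriod σ x := card_image_le.trans (card_range _).le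

theorem pow_card_apply (hσ : IsCyclicPerm σ) (x : α) : (σ ^ Fintype.card α) x = x := by
  rw [← hσ.minimalPeriod_eq_card x, ← Perm.iterate_eq_pow, iterate_minimalPeriod]

theorem sum_range_card_pow_apply [AddCommMonoid N] (hσ : IsCyclicPerm σ) (x : α) (ψ : α → N) :
    ∑ k ∈ range (Fintype.card α), ψ ((σ ^ k) x) = ∑ a, ψ a := by
  simp_rw [← Perm.iterate_eq_pow, ← hσ.minimalPeriod_eq_card x]
  refine sum_nbij (fun k => σ^[k] x) (fun _ _ => mem_univ _) ?_ ?_ fun _ _ => rfl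
  · simpa only [coe_range] using iterate_injOn_Iio_minimalPeriod
  · intro y _
    obtain ⟨k, hk, rfl⟩ := hσ.exists_lt_minimalPeriod_iterate_eq x y
    exact ⟨k, by simpa using hk, rfl⟩

theorem prodShear [AddCommGroup N] (hσ : IsCyclicPerm σ) (ψ : α → N)
    (hψ : ∀ c : N, ∃ l : ℕ, l • ∑ a, ψ a = c) :
    IsCyclicPerm (σ.prodShear fun a => Equiv.addRight (ψ a)) := by
  set ρ := σ.prodShear fun a => Equiv.addRight (ψ a)
  have pow_apply (k : ℕ) (x : α) (c : N) :
      (ρ ^ k) (x, c) = ((σ ^ k) x, c + ∑ j ∈ range k, ψ ((σ ^ j) x)) := by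
    induction k with
    | zero => simp
    | succ k ih =>
      rw [pow_succ', Perm.mul_apply, ih, pow_succ', Perm.mul_apply, sum_range_succ]
      simp [ρ, add_assoc]
  have pow_card_mul_apply (l : ℕ) (x : α) (c : N) :
      (ρ ^ (Fintype.card α * l)) (x, c) = (x, c + l • ∑ a, ψ a) := by
    induction l generalizing c with
    | zero => simp
    | succ l ih =>
      rw [mul_add_one, pow_add, Perm.mul_apply, pow_apply (Fintype.card α), hσ.pow_card_apply,
        hσ.sum_range_card_pow_apply, ih, succ_nsmul', add_assoc]
  rintro ⟨x, c⟩ ⟨y, d⟩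
  obtain ⟨k, hk⟩ := hσ x y
  obtain ⟨l, hl⟩ := hψ (d - c - ∑ j ∈ range k, ψ ((σ ^ j) x))
  refine ⟨k + Fintype.card α * l, ?_⟩
  rw [pow_add, Perm.mul_apply, pow_card_mul_apply, pow_apply, hk, hl]
  congr 1
  abel

end IsCyclicPerm

namespace IsCompleteMapping

theorem permCongr [AddCommGroup G] [AddCommGroup H] {σ : Perm G} (hσ : IsCompleteMapping σ)
    (e : G ≃+ H) : IsCompleteMapping (e.toEquiv.permCongr σ) := by
  have : (fun h => h + e.toEquiv.permCongr σ h) = e ∘ (fun g => g + σ g) ∘ e.symm := by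
    funext h
    simp
  rw [IsCompleteMapping, this]
  exact e.bijective.comp (hσ.comp e.symm.bijective)

theorem prodShear [AddCommGroup A] [AddCommGroup N] {σ : Perm A} (hσ : IsCompleteMapping σ)
    (hN : Odd (Nat.card N)) (ψ : A → N) :
    IsCompleteMapping (σ.prodShear fun a => Equiv.addRight (ψ a)) := by
  let double : N ≃ N := nsmulCoprime (n := 2) (Nat.coprime_two_right.mpr hN)
  unfold IsCompleteMapping
  convert ((Equiv.ofBijective _ hσ).prodShear fun a =>
    double.trans (Equiv.addRight (ψ a))).bijective using 1
  funext ⟨a, c⟩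
  refine Prod.ext rfl ?_
  simp [double, two_nsmul, add_assoc]

end IsCompleteMapping

theorem ZMod.exists_nsmul_eq_of_isUnit {n : ℕ} [NeZero n] {u : ZMod n} (hu : IsUnit u)
    (c : ZMod n) : ∃ l : ℕ, l • u = c :=
  ⟨(c * hu.unit⁻¹).val, by
    rw [nsmul_eq_mul, ZMod.natCast_zmod_val, mul_assoc, hu.val_inv_mul, mul_one]⟩

theorem Nat.totient_mul_prime_pow_of_dvd {p m : ℕ} (hp : p.Prime) (hpm : p ∣ m) (e : ℕ) :
    φ (m * p ^ e) = φ m * p ^ e := by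
  induction e with
  | zero => simp
  | succ e ih =>
    rw [pow_succ', ← mul_assoc, mul_comm m, mul_assoc,
      Nat.totient_mul_of_prime_of_dvd hp (hpm.mul_right _), ih]
    ring

theorem ZMod.exists_finset_isUnit_natCast_mul_add_one {p : ℕ} (hp : p.Prime) (e m : ℕ) :
    ∃ B : Finset (ZMod (p ^ e)),
      (∀ b ∈ B, IsUnit ((m : ZMod (p ^ e)) * b + 1)) ∧ φ (m * p ^ e) ≤ φ m * #B := by
  have : NeZero (p ^ e) := ⟨pow_ne_zero _ hp.ne_zero⟩
  by_cases hpm : p ∣ m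
  · have hnil : IsNilpotent (m : ZMod (p ^ e)) :=
      ⟨e, by rw [← Nat.cast_pow, ZMod.natCast_eq_zero_iff]; exact pow_dvd_pow_of_dvd hpm e⟩
    refine ⟨univ, fun b _ => ((Commute.all _ _).isNilpotent_mul_right hnil).isUnit_add_one, ?_⟩
    rw [card_univ, ZMod.card, Nat.totient_mul_prime_pow_of_dvd hp hpm]
  · have hcop : m.Coprime (p ^ e) :=
      Nat.Coprime.pow_right e (Nat.coprime_comm.mp ((hp.coprime_iff_not_dvd).mpr hpm))
    -- `B` is the preimage of the units under the bijection `b ↦ m * b + 1`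
    have hinj : Injective fun u : (ZMod (p ^ e))ˣ => (m : ZMod (p ^ e))⁻¹ * (u - 1) := by
      intro u v huv
      have := congrArg ((m : ZMod (p ^ e)) * ·) huv
      simpa [← mul_assoc, ZMod.coe_mul_inv_eq_one m hcop, Units.ext_iff] using this
    refine ⟨univ.image fun u : (ZMod (p ^ e))ˣ => (m : ZMod (p ^ e))⁻¹ * (u - 1), ?_, ?_⟩
    · simp only [mem_image, mem_univ, true_and, forall_exists_index]
      rintro b u rfl
      simp [← mul_assoc, ZMod.coe_mul_inv_eq_one m hcop]
    · rw [card_image_of_injective _ hinj, card_univ, ZMod.card_units_eq_totient,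
        Nat.totient_mul hcop]

namespace HasDisjointCompleteMappings

theorem of_subsingleton [AddCommGroup G] [Subsingleton G] : HasDisjointCompleteMappings G := by
  refine ⟨fun _ => 1, fun _ => ?_, Subsingleton.pairwise, {0}, ?_, ?_⟩
  · exact ⟨fun _ _ _ => Subsingleton.elim _ _, fun _ => ⟨0, Subsingleton.elim _ _⟩⟩
  · simp [Nat.card_unique]
  · exact fun _ _ _ _ => ⟨0, Subsingleton.elim _ _⟩

theorem of_addEquiv [AddCommGroup G] [AddCommGroup H] (hG : HasDisjointCompleteMappings G)
    (e : G ≃+ H) : HasDisjointCompleteMappings H := by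
  obtain ⟨σ, hcomp, hdisj, S, hS, hcyc⟩ := hG
  refine ⟨fun j => e.toEquiv.permCongr (σ (e.symm j)), fun j => (hcomp _).permCongr e,
    fun i j hij g => ?_, S.map e.toEquiv.toEmbedding, ?_, ?_⟩
  · simpa using hdisj (e.symm.injective.ne hij) (e.symm g)
  · rwa [card_map, ← Nat.card_congr e.toEquiv]
  · simp only [mem_map_equiv]
    intro j hj
    exact (hcyc _ hj).permCongr e.toEquiv

theorem prod_zmod [AddCommGroup A] [Finite A] {n : ℕ} (hA : HasDisjointCompleteMappings A)
    (hn : Odd n) (B : Finset (ZMod n)) (hB : ∀ b ∈ B, IsUnit ((Nat.card A : ZMod n) * b + 1))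
    (hcard : φ (Nat.card A * n) ≤ φ (Nat.card A) * #B) :
    HasDisjointCompleteMappings (A × ZMod n) := by
  classical
  have : NeZero n := ⟨hn.pos.ne'⟩
  have := Fintype.ofFinite A
  obtain ⟨σ, hcomp, hdisj, S, hS, hcyc⟩ := hA
  let ψ (b : ZMod n) (a : A) : ZMod n := b + if a = 0 then 1 else 0
  refine ⟨fun ib => (σ ib.1).prodShear fun a => Equiv.addRight (ψ ib.2 a),
    fun ib => (hcomp ib.1).prodShear (by rwa [Nat.card_zmod]) _, ?_, S ×ˢ B, ?_, ?_⟩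
  · rintro ⟨i, b⟩ ⟨j, b'⟩ hne ⟨a, c⟩ heq
    simp only [prodShear_apply, coe_addRight, Prod.mk.injEq, add_right_inj, ψ] at heq
    obtain rfl | hij := eq_or_ne i j
    · exact hne (by rw [add_left_injective _ heq.2])
    · exact hdisj hij a heq.1
  · rw [card_product, Nat.card_prod, Nat.card_zmod]
    exact hcard.trans (Nat.mul_le_mul_right _ hS)
  · simp only [mem_product, and_imp, Prod.forall]
    intro i b hi hb
    refine (hcyc i hi).prodShear _ (ZMod.exists_nsmul_eq_of_isUnit ?_)
    simpa [ψ, sum_add_distrib, nsmul_eq_mul, Nat.card_eq_fintype_card] using hB b hb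

theorem pi_zmod_prime_pow (ι : Type*) [Finite ι] :
    ∀ p e : ι → ℕ, (∀ i, (p i).Prime) → (∀ i, Odd (p i ^ e i)) →
      HasDisjointCompleteMappings (∀ i, ZMod (p i ^ e i)) := by
  induction ι using Finite.induction_empty_option with
  | of_equiv f ih =>
    intro p e hp hodd
    exact (ih (p ∘ f) (e ∘ f) (fun i => hp _) fun i => hodd _).of_addEquiv
      (RingEquiv.piCongrLeft (fun i => ZMod (p i ^ e i)) f).toAddEquiv
  | h_empty => exact fun _ _ _ _ => of_subsingleton
  | h_option ih =>
    intro p e hp hodd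
    have (i : _) : NeZero (p (some i) ^ e (some i)) := ⟨(hodd _).pos.ne'⟩
    obtain ⟨B, hB, hcard⟩ := ZMod.exists_finset_isUnit_natCast_mul_add_one (hp none) (e none)
      (Nat.card (∀ i, ZMod (p (some i) ^ e (some i))))
    exact ((ih _ _ (fun i => hp _) fun i => hodd _).prod_zmod (hodd none) B hB hcard).of_addEquiv
      (AddEquiv.prodComm.trans
        (RingEquiv.piOptionEquivProd (R := fun i => ZMod (p i ^ e i))).symm.toAddEquiv)

theorem of_odd_card [AddCommGroup G] [Finite G] (hG : Odd (Nat.card G)) :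
    HasDisjointCompleteMappings G := by
  obtain ⟨ι, _, p, hp, e, ⟨f⟩⟩ := AddCommGroup.equiv_directSum_zmod_of_finite G
  let g := f.trans (DirectSum.addEquivProd _)
  have hodd (i : ι) : Odd (p i ^ e i) := hG.of_dvd_nat <| by
    rw [Nat.card_congr g.toEquiv, Nat.card_pi]
    simpa only [Nat.card_zmod] using dvd_prod_of_mem _ (mem_univ i)
  exact (pi_zmod_prime_pow ι p e hp hodd).of_addEquiv g.symm

end HasDisjointCompleteMappings

end

/-- **Disjoint complete mappings of odd abelian groups.**
If `G` is a finite abelian group of odd order `n`, then there exist `n`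
pairwise disjoint complete mappings of `G`, of which at least `φ(n)` are
cyclic permutations (a permutation is cyclic if some element's forward orbit
covers the whole group). -/
theorem disjoint_complete_mappings_of_odd_abelian
    (G : Type*) [AddCommGroup G] [Fintype G]
    (hodd : Odd (Fintype.card G)) :
    ∃ σ : Fin (Fintype.card G) → Equiv.Perm G,
      (∀ i, Function.Bijective (fun g : G => g + σ i g)) ∧
      (∀ i j, i ≠ j → ∀ g : G, σ i g ≠ σ j g) ∧
      ∃ S : Finset (Fin (Fintype.card G)),
        Nat.totient (Fintype.card G) ≤ S.card ∧
        ∀ i ∈ S, ∃ x : G, ∀ y : G, ∃ k : ℕ, ((σ i) ^ k) x = y := by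
  rw [← Nat.card_eq_fintype_card] at hodd ⊢
  obtain ⟨σ, hcomp, hdisj, S, hS, hcyc⟩ := HasDisjointCompleteMappings.of_odd_card hodd
  let e := Finite.equivFin G
  refine ⟨fun i => σ (e.symm i), fun i => hcomp _, fun i j hij => hdisj (e.symm.injective.ne hij),
    S.map e.toEmbedding, by rwa [card_map], fun i hi => ⟨0, hcyc (e.symm i) ?_ 0⟩⟩
  simpa [mem_map_equiv] using hi
end

section
/- Every finite abelian group admits a doubly harmonious sequence; that is, for every finite abelian group G there exists a sequence g_0, g_1, …, g_m in G such that each element of G appears exactly twice among the terms g_i and exactly twice among the cyclic consecutive sums ĝ_0 = g_m + g_0 and ĝ_i = g_{i-1} + g_i for 1 ≤ i ≤ m. -/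
/-!
A doubly harmonious sequence is read off an Eulerian circuit of a 2-in, 2-out digraph on `G` in
which every element is the head of two edges and the label `x + y` of two edges `x → y`: list
the tails of the edges in the order of the circuit. Such a circuit exists by the switching
argument. Among the permutations of the edges sending every edge to one leaving its head, take
one whose cycle through a fixed edge is largest. If it is not the whole edge set, connectivity
gives two edges with a common head in different cycles, and exchanging their successors merges
the two cycles.

The graphs are built by induction along a decomposition of `G` into cyclic groups. An edge
`x → x'` of a graph on `V` gives the edges `(y, x) → (y + d, x')` on `ZMod q × V`, where
`d ∈ {0, 1}` takes both values on each pair of edges with equal label. The labels are then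
`(2y + d, x + x')`, and they are hit twice because `(y, d) ↦ 2y + d` is two-to-one. A loop
with `d = 1` keeps the new graph connected, and a loop with `d = 0` provides the two loops
needed at the next step.
-/

open Function

theorem Nat.card_subtype_snd_eq {α β : Type*} (b : β) :
    Nat.card {p : α × β // p.2 = b} = Nat.card α :=
  Nat.card_congr ⟨fun p => p.1.1, fun a => ⟨(a, b), rfl⟩, by rintro ⟨⟨a, _⟩, rfl⟩; rfl,
    fun _ => rfl⟩

theorem Relation.EqvGen.iff_of_forall_rel {α : Type*} {r : α → α → Prop} {P : α → Prop}
    (hP : ∀ a b, r a b → (P a ↔ P b)) {a b : α} (h : EqvGen r a b) : P a ↔ P b := by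
  induction h with
  | rel a b hab => exact hP a b hab
  | refl => rfl
  | symm _ _ _ ih => exact ih.symm
  | trans _ _ _ _ _ ih₁ ih₂ => exact ih₁.trans ih₂

theorem ZMod.card_two_mul_add_toNat_eq (q : ℕ) [NeZero q] (a : ZMod q) :
    Nat.card {p : ZMod q × Bool // 2 * p.1 + p.2.toNat = a} = 2 := by
  let F : ZMod q × Bool → ZMod q := fun p => 2 * p.1 + p.2.toNat
  -- `ψ` is `k ↦ k - 1` on `ZMod (2 * q)` in disguise, so all fibers of `F` have the same size.
  let ψ : ZMod q × Bool ≃ ZMod q × Bool :=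
    { toFun p := if p.2 then (p.1, false) else (p.1 - 1, true)
      invFun p := if p.2 then (p.1 + 1, false) else (p.1, true)
      left_inv := by rintro ⟨y, _ | _⟩ <;> simp
      right_inv := by rintro ⟨y, _ | _⟩ <;> simp }
  have hψ : ∀ p, F (ψ p) = F p - 1 := by
    rintro ⟨y, _ | _⟩
    · simp [F, ψ]
      ring
    · simp [F, ψ]
  have hconst : ∀ b, Nat.card {p // F p = b} = Nat.card {p // F p = 0} := by
    intro b
    obtain ⟨k, rfl⟩ := ZMod.natCast_zmod_surjective b
    induction k with
    | zero => simp
    | succ k ih =>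
      rw [← ih, Nat.cast_succ]
      exact Nat.card_congr (ψ.subtypeEquiv fun p => by rw [hψ, sub_eq_iff_eq_add])
  have htotal : q * 2 = q * Nat.card {p // F p = 0} := by
    calc q * 2 = Nat.card (ZMod q × Bool) := by simp
      _ = ∑ b : ZMod q, Nat.card {p // F p = b} := by
        rw [← Nat.card_congr (Equiv.sigmaFiberEquiv F), Nat.card_sigma]
      _ = q * Nat.card {p // F p = 0} := by
        rw [Finset.sum_congr rfl fun b _ => hconst b, Finset.sum_const, Finset.card_univ,
          ZMod.card, smul_eq_mul]
  exact (hconst a).trans (Nat.eq_of_mul_eq_mul_left (NeZero.pos q) htotal).symm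

theorem exists_bool_bijective_on_fibers {α β : Type*} {f : α → β}
    (hf : ∀ c, Nat.card {x // f x = c} = 2) {a b : α} (hab : a ≠ b) :
    ∃ g : α → Bool, g a = true ∧ g b = false ∧
      ∀ c, Bijective fun x : {x // f x = c} => g x := by
  classical
  have hsec : ∀ c, ∃ s, f s = c ∧ (c = f a → s = a) ∧ (c = f b → s ≠ b) := by
    intro c
    by_cases hca : c = f a
    · exact ⟨a, hca.symm, fun _ => rfl, fun _ => hab⟩
    by_cases hcb : c = f b
    · obtain ⟨⟨s, hs⟩, hsb, -⟩ := (Nat.card_eq_two_iff' ⟨b, hcb.symm⟩).mp (hf c)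
      exact ⟨s, hs, (absurd · hca), fun _ h => hsb (Subtype.ext h)⟩
    · obtain ⟨x, hx⟩ : Nonempty {x // f x = c} := Nat.card_pos_iff.mp (by simp [hf]) |>.1
      exact ⟨x, hx, (absurd · hca), (absurd · hcb)⟩
  choose σ hσ using hsec
  refine ⟨fun x => decide (x = σ (f x)), by simp [(hσ _).2.1 rfl],
    by simpa using ((hσ (f b)).2.2 rfl).symm, fun c => ?_⟩
  have : Finite {x // f x = c} := Nat.finite_of_card_ne_zero (by simp [hf])
  refine (Nat.bijective_iff_injective_and_card _).mpr ⟨?_, by simp [hf]⟩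
  let s : {x // f x = c} := ⟨σ c, (hσ c).1⟩
  have hg : ∀ x : {x // f x = c}, decide (x.1 = σ (f x.1)) = decide (x = s) := by
    rintro ⟨x, rfl⟩
    simp [s]
  obtain ⟨t, -, huniq⟩ := (Nat.card_eq_two_iff' s).mp (hf c)
  intro x y hxy
  simp only [hg, decide_eq_decide] at hxy
  by_cases hx : x = s
  · rw [hx, hxy.mp hx]
  · rw [huniq x hx, huniq y (hx ∘ hxy.mpr)]

namespace Equiv.Perm

variable {α : Type*}

theorem exists_zmod_equiv_of_forall_sameCycle [Finite α] {π : Perm α} {x : α}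
    (h : ∀ y, π.SameCycle x y) {N : ℕ} (hN : Nat.card α = N) :
    ∃ φ : ZMod N ≃ α, ∀ i, φ (i + 1) = π (φ i) := by
  have horbit : ∀ y, y ∈ MulAction.orbit (Subgroup.zpowers π) x := by
    intro y
    obtain ⟨k, rfl⟩ := h y
    exact ⟨⟨π ^ k, k, rfl⟩, rfl⟩
  have hcard : Function.minimalPeriod (π • ·) x = N := by
    rw [← hN, ← Nat.card_zmod (Function.minimalPeriod _ _),
      ← Nat.card_congr (MulAction.orbitZPowersEquiv π x)]
    exact Nat.card_congr (Equiv.subtypeUnivEquiv horbit)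
  subst hcard
  refine ⟨(MulAction.orbitZPowersEquiv π x).symm.trans (Equiv.subtypeUnivEquiv horbit), ?_⟩
  intro i
  obtain ⟨k, rfl⟩ := ZMod.intCast_surjective i
  simp only [Equiv.trans_apply, Equiv.subtypeUnivEquiv_apply]
  rw [← Int.cast_one, ← Int.cast_add, add_comm, MulAction.orbitZPowersEquiv_symm_apply',
    MulAction.orbitZPowersEquiv_symm_apply', zpow_one_add, mul_smul]
  rfl

theorem pow_apply_eq_pow_apply_of_forall_lt {σ τ : Perm α} {x : α} {n : ℕ}
    (h : ∀ i < n, σ ((τ ^ i) x) = τ ((τ ^ i) x)) : (σ ^ n) x = (τ ^ n) x := by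
  induction n with
  | zero => rfl
  | succ n ih =>
    rw [pow_succ', pow_succ', mul_apply, mul_apply, ih fun i hi => h i (by omega),
      h n n.lt_succ_self]

variable [DecidableEq α]

-- The `π`-orbit of `x` reaches `a` without meeting `b`, and `π * swap a b` agrees with `π` there.
theorem SameCycle.mul_swap [Finite α] {π : Perm α} {a b x : α} (hab : ¬π.SameCycle a b)
    (hx : π.SameCycle x a) : (π * swap a b).SameCycle x a := by
  have hex : ∃ n : ℕ, (π ^ n) x = a := hx.exists_nat_pow_eq
  refine ⟨Nat.find hex, ?_⟩
  rw [zpow_natCast, pow_apply_eq_pow_apply_of_forall_lt, Nat.find_spec hex]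
  intro i hi
  have hxa : (π ^ i) x ≠ a := Nat.find_min hex hi
  have hxb : (π ^ i) x ≠ b := fun hb =>
    hab (hx.symm.trans (hb ▸ sameCycle_pow_right.mpr (SameCycle.refl _ _)))
  rw [mul_apply, swap_apply_of_ne_of_ne hxa hxb]

theorem sameCycle_mul_swap [Finite α] {π : Perm α} {a b : α} (hab : ¬π.SameCycle a b) :
    (π * swap a b).SameCycle a b := by
  have hb : (π * swap a b).SameCycle b (π a) := ⟨1, by simp⟩
  exact (hb.trans ((sameCycle_apply_left.mpr (SameCycle.refl _ _)).mul_swap hab)).symm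

end Equiv.Perm

section Euler

open Equiv Equiv.Perm Finset

variable {α V : Type*} {t h : α → V}

theorem exists_head_eq_of_not_sameCycle
    (hconn : ∀ u v, Relation.EqvGen (fun u v => ∃ e, t e = u ∧ h e = v) u v)
    {π : Perm α} (hπ : ∀ e, t (π e) = h e) {e₀ e₁ : α} (he₁ : ¬π.SameCycle e₀ e₁) :
    ∃ a b, h a = h b ∧ π.SameCycle e₀ a ∧ ¬π.SameCycle e₀ b := by
  by_contra! hsplit
  let P v := ∃ e, h e = v ∧ π.SameCycle e₀ e
  have hout : ∀ e, P (t e) → π.SameCycle e₀ e := by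
    rintro e ⟨a, ha, hca⟩
    have := hsplit a (π.symm e) (by rw [ha, ← hπ, apply_symm_apply]) hca
    exact sameCycle_symm_apply_right.mp this
  have hP : ∀ u v, (∃ e, t e = u ∧ h e = v) → (P u ↔ P v) := by
    rintro _ _ ⟨e, rfl, rfl⟩
    refine ⟨fun hu => ⟨e, rfl, hout e hu⟩, fun ⟨a, ha, hca⟩ => ?_⟩
    exact ⟨π.symm e, by rw [← hπ, apply_symm_apply],
      sameCycle_symm_apply_right.mpr (hsplit a e ha hca)⟩
  exact he₁ (hout e₁ ((Relation.EqvGen.iff_of_forall_rel hP (hconn _ _)).mp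
    ⟨e₀, rfl, SameCycle.refl _ _⟩))

-- Euler's theorem for connected digraphs with equal in- and out-degrees: the single cycle of `π`
-- is an Eulerian circuit.
theorem exists_perm_forall_sameCycle [Finite α]
    (hdeg : ∀ v, Nat.card {e // h e = v} = Nat.card {e // t e = v})
    (hconn : ∀ u v, Relation.EqvGen (fun u v => ∃ e, t e = u ∧ h e = v) u v) (e₀ : α) :
    ∃ π : Perm α, (∀ e, t (π e) = h e) ∧ ∀ e, π.SameCycle e₀ e := by
  classical
  have := Fintype.ofFinite α
  have hiso : ∀ v, {e // h e = v} ≃ {e // t e = v} := fun v =>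
    (Finite.card_eq.mp (hdeg v)).some
  obtain ⟨π, hπ, hmax⟩ := exists_max_image {π : Perm α | ∀ e, t (π e) = h e}
    (fun π => #{e | π.SameCycle e₀ e})
    ⟨ofFiberEquiv hiso, mem_filter.mpr ⟨mem_univ _, ofFiberEquiv_map hiso⟩⟩
  rw [mem_filter] at hπ
  refine ⟨π, hπ.2, ?_⟩
  by_contra! ⟨e₁, he₁⟩
  obtain ⟨a, b, hab, ha, hb⟩ := exists_head_eq_of_not_sameCycle hconn hπ.2 he₁
  have hnab : ¬π.SameCycle a b := fun hsc => hb (ha.trans hsc)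
  have hfollow : ∀ e, t ((π * swap a b) e) = h e := by
    intro e
    rw [mul_apply, hπ.2]
    rcases eq_or_ne e a with rfl | hea
    · rw [swap_apply_left, hab]
    rcases eq_or_ne e b with rfl | heb
    · rw [swap_apply_right, hab]
    · rw [swap_apply_of_ne_of_ne hea heb]
  have he₀a : (π * swap a b).SameCycle e₀ a := ha.mul_swap hnab
  have hgrow : #{e | π.SameCycle e₀ e} < #{e | (π * swap a b).SameCycle e₀ e} := by
    refine card_lt_card ((ssubset_iff_of_subset fun e he => ?_).mpr ⟨b, ?_, ?_⟩)
    · simp only [mem_filter, mem_univ, true_and] at he ⊢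
      exact he₀a.trans ((he.symm.trans ha).mul_swap hnab).symm
    · simpa using he₀a.trans (sameCycle_mul_swap hnab)
    · simpa using hb
  exact (hmax _ (mem_filter.mpr ⟨mem_univ _, hfollow⟩)).not_gt hgrow

end Euler

-- `(b, x)` is the `b`-th edge leaving `x`; its label is `x + head (b, x)`.
structure DoublyHarmoniousGraph (V : Type*) [AddCommGroup V] where
  head : Bool × V → V
  card_head_fiber : ∀ v, Nat.card {e // head e = v} = 2
  card_label_fiber : ∀ a, Nat.card {e : Bool × V // e.2 + head e = a} = 2
  connected : ∀ u v, Relation.EqvGen (fun u v => ∃ e : Bool × V, e.2 = u ∧ head e = v) u v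
  loop₀ : Bool × V
  loop₁ : Bool × V
  loop₀_ne_loop₁ : loop₀ ≠ loop₁
  head_loop₀ : head loop₀ = loop₀.2
  head_loop₁ : head loop₁ = loop₁.2

namespace DoublyHarmoniousGraph

variable {V W : Type*} [AddCommGroup V] [AddCommGroup W]

def ofSubsingleton [Subsingleton V] : DoublyHarmoniousGraph V where
  head e := e.2
  card_head_fiber v := by
    rw [Nat.card_subtype_snd_eq, Nat.card_eq_fintype_card, Fintype.card_bool]
  card_label_fiber a := by
    rw [Nat.card_congr (Equiv.subtypeUnivEquiv fun _ => Subsingleton.elim _ _),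
      Nat.card_prod, Nat.card_of_subsingleton (0 : V), Nat.card_eq_fintype_card,
      Fintype.card_bool]
  connected u v := Subsingleton.elim u v ▸ .refl u
  loop₀ := (false, 0)
  loop₁ := (true, 0)
  loop₀_ne_loop₁ := by simp
  head_loop₀ := rfl
  head_loop₁ := rfl

def congr (S : DoublyHarmoniousGraph V) (φ : V ≃+ W) : DoublyHarmoniousGraph W where
  head e := φ (S.head (e.1, φ.symm e.2))
  card_head_fiber w := by
    rw [← S.card_head_fiber (φ.symm w)]
    exact Nat.card_congr (((Equiv.refl Bool).prodCongr φ.symm.toEquiv).subtypeEquiv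
      fun e => φ.eq_symm_apply.symm)
  card_label_fiber a := by
    rw [← S.card_label_fiber (φ.symm a)]
    refine Nat.card_congr (((Equiv.refl Bool).prodCongr φ.symm.toEquiv).subtypeEquiv
      fun e => ?_)
    rw [φ.eq_symm_apply, map_add]
    change _ ↔ φ (φ.symm e.2) + _ = a
    rw [φ.apply_symm_apply]
    rfl
  connected w w' := by
    let r' u v := ∃ e : Bool × W, e.2 = u ∧ φ (S.head (e.1, φ.symm e.2)) = v
    have heqv := Relation.EqvGen.is_equivalence r'
    have hP : ∀ u v, (∃ e : Bool × V, e.2 = u ∧ S.head e = v) →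
        (Relation.EqvGen r' w (φ u) ↔ Relation.EqvGen r' w (φ v)) := by
      rintro _ _ ⟨e, rfl, rfl⟩
      have h : Relation.EqvGen r' (φ e.2) (φ (S.head e)) := .rel _ _ ⟨(e.1, φ e.2), rfl, by simp⟩
      exact ⟨(heqv.trans · h), (heqv.trans · (heqv.symm h))⟩
    have h := (Relation.EqvGen.iff_of_forall_rel hP (S.connected (φ.symm w) (φ.symm w'))).mp
    rw [φ.apply_symm_apply, φ.apply_symm_apply] at h
    exact h (heqv.refl w)
  loop₀ := (S.loop₀.1, φ S.loop₀.2)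
  loop₁ := (S.loop₁.1, φ S.loop₁.2)
  loop₀_ne_loop₁ := by simpa [Prod.ext_iff] using S.loop₀_ne_loop₁
  head_loop₀ := by simp [S.head_loop₀]
  head_loop₁ := by simp [S.head_loop₁]

section Product

variable (q : ℕ) (S : DoublyHarmoniousGraph V) (m : Bool × V → Bool)

def prodHead (e : Bool × (ZMod q × V)) : ZMod q × V :=
  (e.2.1 + (m (e.1, e.2.2)).toNat, S.head (e.1, e.2.2))

theorem card_prodHead_fiber (p : ZMod q × V) : Nat.card {e // prodHead q S m e = p} = 2 := by
  rw [← S.card_head_fiber p.2]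
  refine Nat.card_congr
    { toFun e := ⟨(e.1.1, e.1.2.2), congrArg Prod.snd e.2⟩
      invFun e := ⟨(e.1.1, (p.1 - (m e.1).toNat, e.1.2)), by simp [prodHead, e.2]⟩
      left_inv := ?_
      right_inv _ := rfl }
  rintro ⟨⟨b, y, x⟩, rfl⟩
  simp [prodHead]

theorem prodHead_label (b : Bool) (y : ZMod q) (x : V) :
    (y, x) + prodHead q S m (b, (y, x)) = (2 * y + (m (b, x)).toNat, x + S.head (b, x)) := by
  simp only [prodHead, Prod.mk_add_mk, two_mul, add_assoc]

theorem card_prodLabel_fiber [NeZero q]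
    (hm : ∀ ℓ, Bijective fun e : {e : Bool × V // e.2 + S.head e = ℓ} => m e)
    (p : ZMod q × V) : Nat.card {e // e.2 + prodHead q S m e = p} = 2 := by
  rw [← ZMod.card_two_mul_add_toNat_eq q p.1]
  let μ : {e : Bool × V // e.2 + S.head e = p.2} ≃ Bool := .ofBijective _ (hm p.2)
  let ν : {e // e.2 + prodHead q S m e = p} ≃
      {z : ZMod q × {e : Bool × V // e.2 + S.head e = p.2} // 2 * z.1 + (m z.2).toNat = p.1} :=
    { toFun
        | ⟨(b, y, x), he⟩ =>
          have he := Prod.ext_iff.mp ((prodHead_label q S m b y x).symm.trans he)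
          ⟨(y, ⟨(b, x), he.2⟩), he.1⟩
      invFun
        | ⟨(y, ⟨(b, x), hℓ⟩), hy⟩ =>
          ⟨(b, y, x), (prodHead_label q S m b y x).trans (Prod.ext hy hℓ)⟩
      left_inv _ := rfl
      right_inv _ := rfl }
  exact Nat.card_congr (ν.trans (((Equiv.refl _).prodCongr μ).subtypeEquiv fun _ => Iff.rfl))

theorem connected_prodHead [NeZero q] (hm₀ : m S.loop₀ = true) (u v : ZMod q × V) :
    Relation.EqvGen (fun u v => ∃ e, e.2 = u ∧ prodHead q S m e = v) u v := by
  set r' := fun u v => ∃ e, e.2 = u ∧ prodHead q S m e = v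
  have heqv := Relation.EqvGen.is_equivalence r'
  let P p := Relation.EqvGen r' u p
  have hlift : ∀ (e : Bool × V) (y : ZMod q), P (y, e.2) ↔ P (y + (m e).toNat, S.head e) := by
    intro e y
    have h : Relation.EqvGen r' (y, e.2) (y + (m e).toNat, S.head e) :=
      .rel _ _ ⟨(e.1, y, e.2), rfl, rfl⟩
    exact ⟨(heqv.trans · h), (heqv.trans · (heqv.symm h))⟩
  have hshift : ∀ y (k : ℕ), P (y, S.loop₀.2) → P (y + k, S.loop₀.2) := by
    intro y k hy
    induction k with
    | zero => simpa using hy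
    | succ k ih =>
      have := (hlift S.loop₀ (y + k)).mp ih
      rwa [hm₀, S.head_loop₀, Bool.toNat_true, Nat.cast_one, add_assoc, ← Nat.cast_succ] at this
  have hex : ∀ x x', (∃ y, P (y, x)) → ∃ y, P (y, x') := by
    refine fun x x' => (Relation.EqvGen.iff_of_forall_rel (P := fun x => ∃ y, P (y, x)) ?_
      (S.connected x x')).mp
    rintro _ _ ⟨e, rfl, rfl⟩
    refine ⟨fun ⟨y, hy⟩ => ⟨_, (hlift e y).mp hy⟩, fun ⟨y, hy⟩ => ⟨y - (m e).toNat, ?_⟩⟩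
    exact (hlift e _).mpr (by rwa [sub_add_cancel])
  have hall : ∀ x x', (∀ y, P (y, x)) → ∀ y, P (y, x') := by
    refine fun x x' => (Relation.EqvGen.iff_of_forall_rel (P := fun x => ∀ y, P (y, x)) ?_
      (S.connected x x')).mp
    rintro _ _ ⟨e, rfl, rfl⟩
    refine ⟨fun h y => ?_, fun h y => (hlift e y).mpr (h _)⟩
    simpa using (hlift e (y - (m e).toNat)).mp (h _)
  obtain ⟨y₀, hy₀⟩ := hex u.2 S.loop₀.2 ⟨u.1, heqv.refl u⟩
  refine hall S.loop₀.2 v.2 (fun y => ?_) v.1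
  obtain ⟨k, hk⟩ := ZMod.natCast_zmod_surjective (y - y₀)
  simpa [hk] using hshift y₀ k hy₀

end Product

noncomputable def prod (S : DoublyHarmoniousGraph V) {q : ℕ} (hq : 1 < q) :
    DoublyHarmoniousGraph (ZMod q × V) :=
  have : Fact (1 < q) := ⟨hq⟩
  have hm := exists_bool_bijective_on_fibers S.card_label_fiber S.loop₀_ne_loop₁
  { head := prodHead q S hm.choose
    card_head_fiber := card_prodHead_fiber q S _
    card_label_fiber := card_prodLabel_fiber q S _ hm.choose_spec.2.2
    connected := connected_prodHead q S _ hm.choose_spec.1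
    loop₀ := (S.loop₁.1, 0, S.loop₁.2)
    loop₁ := (S.loop₁.1, 1, S.loop₁.2)
    loop₀_ne_loop₁ := by simp
    head_loop₀ := by simp [prodHead, hm.choose_spec.2.1, S.head_loop₁]
    head_loop₁ := by simp [prodHead, hm.choose_spec.2.1, S.head_loop₁] }

theorem nonempty_pi_zmod {ι : Type*} [Finite ι] (n : ι → ℕ) (hn : ∀ i, 1 < n i) :
    Nonempty (DoublyHarmoniousGraph (∀ i, ZMod (n i))) := by
  induction ι using Finite.induction_empty_option with
  | of_equiv e ih =>
    obtain ⟨S⟩ := ih (n ∘ e) fun i => hn _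
    exact ⟨S.congr (RingEquiv.piCongrLeft (fun j => ZMod (n j)) e).toAddEquiv⟩
  | h_empty => exact ⟨ofSubsingleton⟩
  | h_option ih =>
    obtain ⟨S⟩ := ih (fun i => n (some i)) fun i => hn _
    exact ⟨(S.prod (hn none)).congr
      (RingEquiv.piOptionEquivProd (R := fun i => ZMod (n i))).toAddEquiv.symm⟩

theorem exists_seq [Fintype V] (S : DoublyHarmoniousGraph V) :
    ∃ g : ZMod (2 * Fintype.card V) → V,
      (∀ a, Nat.card {i // g i = a} = 2) ∧ ∀ a, Nat.card {i // g (i - 1) + g i = a} = 2 := by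
  have htail : ∀ v, Nat.card {e : Bool × V // e.2 = v} = 2 := fun v => by
    rw [Nat.card_subtype_snd_eq, Nat.card_eq_fintype_card, Fintype.card_bool]
  obtain ⟨π, hπ, hcyc⟩ := exists_perm_forall_sameCycle (t := Prod.snd)
    (fun v => (S.card_head_fiber v).trans (htail v).symm) S.connected S.loop₀
  obtain ⟨φ, hφ⟩ := Equiv.Perm.exists_zmod_equiv_of_forall_sameCycle hcyc
    (N := 2 * Fintype.card V)
    (by rw [Nat.card_eq_fintype_card, Fintype.card_prod, Fintype.card_bool])
  refine ⟨fun i => (φ i).2, fun a => ?_, fun a => ?_⟩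
  · exact (Nat.card_congr (φ.subtypeEquiv fun _ => Iff.rfl)).trans (htail a)
  · have hsum : ∀ i, (φ (i - 1)).2 + (φ i).2 = (φ (i - 1)).2 + S.head (φ (i - 1)) := by
      intro i
      rw [← hπ, ← hφ, sub_add_cancel]
    refine (Nat.card_congr (((Equiv.subRight 1).trans φ).subtypeEquiv fun i => ?_)).trans
      (S.card_label_fiber a)
    simp [hsum]

end DoublyHarmoniousGraph

/-- **Every finite abelian group admits a doubly harmonious sequence.**
There is a sequence `g` of length `2 * |G|` (indexed cyclically, so that
`ĝ i = g (i - 1) + g i`, with `ĝ 0 = g m + g 0`) in which every element of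
`G` appears exactly twice among the terms and exactly twice among the cyclic
consecutive sums. -/
theorem abelian_doubly_harmonious
    (G : Type*) [AddCommGroup G] [Fintype G] :
    ∃ g : ZMod (2 * Fintype.card G) → G,
      (∀ a : G, Nat.card {i : ZMod (2 * Fintype.card G) // g i = a} = 2) ∧
      (∀ a : G, Nat.card {i : ZMod (2 * Fintype.card G) // g (i - 1) + g i = a} = 2) := by
  obtain ⟨ι, _, n, hn, ⟨e⟩⟩ := AddCommGroup.equiv_directSum_zmod_of_finite' G
  obtain ⟨S⟩ := DoublyHarmoniousGraph.nonempty_pi_zmod n hn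
  exact (S.congr (e.trans (DirectSum.addEquivProd _)).symm).exists_seq
end

section
/- If G is a finite group of even order that admits a harmonious sequence and H is a finite abelian group, then the direct product G × H admits a doubly harmonious sequence. -/
set_option linter.unusedSectionVars false

section Helpers

/-- Product equivalence where the second-factor equivalence may depend on the first point. -/
def prodTwist {α β γ δ : Type*} (C : α ≃ β) (E : α → (γ ≃ δ)) : α × γ ≃ β × δ where
  toFun p := (C p.1, E p.1 p.2)
  invFun p := (C.symm p.1, (E (C.symm p.1)).symm p.2)
  left_inv p := by obtain ⟨a, g⟩ := p; simp
  right_inv p := by obtain ⟨b, h⟩ := p; simp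

@[simp] lemma prodTwist_apply {α β γ δ : Type*} (C : α ≃ β) (E : α → (γ ≃ δ)) (p : α × γ) :
    prodTwist C E p = (C p.1, E p.1 p.2) := rfl

/-- fiber of `fst` after an equivalence onto `β × Bool` has two elements -/
lemma card_fiber_eq_two {α β : Type*} (U : α ≃ β × Bool) (f : α → β)
    (hf : ∀ i, (U i).1 = f i) (b : β) : Nat.card {i : α // f i = b} = 2 := by
  have e1 : {i : α // f i = b} ≃ {p : β × Bool // p.1 = b} :=
    Equiv.subtypeEquiv U (fun i => by rw [hf])
  have e2 : {p : β × Bool // p.1 = b} ≃ Bool :=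
    { toFun := fun p => p.1.2
      invFun := fun t => ⟨(b, t), rfl⟩
      left_inv := fun p => by
        obtain ⟨⟨x, t⟩, h⟩ := p
        cases h; rfl
      right_inv := fun t => rfl }
  rw [Nat.card_congr (e1.trans e2)]
  simp

end Helpers

section Index

variable (w t : ℕ) [NeZero w] [NeZero t]

instance : NeZero (w * t) := ⟨mul_ne_zero (NeZero.ne w) (NeZero.ne t)⟩

/-- remainder mod `w` -/
def fastZ (q : ZMod (w * t)) : ZMod w := (q.val : ZMod w)

/-- quotient by `w` -/
def slowZ (q : ZMod (w * t)) : ZMod t := ((q.val / w : ℕ) : ZMod t)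

lemma fastZ_eq_cast (q : ZMod (w * t)) :
    fastZ w t q = ZMod.castHom (dvd_mul_right w t) (ZMod w) q := by
  rw [fastZ, ZMod.natCast_val, ZMod.castHom_apply]

lemma fastZ_sub_one (q : ZMod (w * t)) : fastZ w t (q - 1) = fastZ w t q - 1 := by
  rw [fastZ_eq_cast, fastZ_eq_cast, map_sub, map_one]

lemma val_sub_one {N : ℕ} [NeZero N] (q : ZMod N) :
    (q - 1).val = if q = 0 then N - 1 else q.val - 1 := by
  rcases Nat.exists_eq_succ_of_ne_zero (NeZero.ne N) with ⟨M, rfl⟩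
  split_ifs with hq
  · subst hq
    rw [zero_sub, ZMod.val_neg_one]
    omega
  · have hv : q.val ≠ 0 := fun h => hq ((ZMod.val_eq_zero q).mp h)
    have hlt : q.val < M + 1 := ZMod.val_lt q
    have h1 : (1:ℕ) ≤ q.val := by omega
    have : q - 1 = ((q.val - 1 : ℕ) : ZMod (M+1)) := by
      have hqc : ((q.val : ℕ) : ZMod (M+1)) = q := ZMod.natCast_rightInverse q
      rw [Nat.cast_sub h1, hqc, Nat.cast_one]
    rw [this, ZMod.val_natCast, Nat.mod_eq_of_lt (by omega)]

lemma fastZ_eq_zero_iff (q : ZMod (w * t)) : fastZ w t q = 0 ↔ w ∣ q.val := by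
  rw [fastZ, ZMod.natCast_eq_zero_iff]

lemma slowZ_sub_one_of_ne (q : ZMod (w * t)) (h : fastZ w t q ≠ 0) :
    slowZ w t (q - 1) = slowZ w t q := by
  rw [Ne, fastZ_eq_zero_iff] at h
  have hw : 0 < w := NeZero.pos w
  have hv0 : q.val ≠ 0 := fun h0 => h (h0 ▸ dvd_zero w)
  have hq0 : q ≠ 0 := fun h0 => hv0 (by rw [h0, ZMod.val_zero])
  have hval : (q - 1).val = q.val - 1 := by rw [val_sub_one, if_neg hq0]
  rw [slowZ, slowZ, hval]
  congr 1
  have h1 : q.val = w * (q.val / w) + q.val % w := (Nat.div_add_mod q.val w).symm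
  have h2 : q.val % w ≠ 0 := fun hh => h (Nat.dvd_of_mod_eq_zero hh)
  have h3 : q.val % w < w := Nat.mod_lt _ hw
  have heq : q.val - 1 = w * (q.val / w) + (q.val % w - 1) := by omega
  rw [heq, Nat.mul_add_div hw]
  have hz : (q.val % w - 1) / w = 0 := Nat.div_eq_of_lt (by omega)
  omega

lemma slowZ_sub_one_of_eq (q : ZMod (w * t)) (h : fastZ w t q = 0) :
    slowZ w t (q - 1) = slowZ w t q - 1 := by
  rw [fastZ_eq_zero_iff] at h
  have hw : 0 < w := NeZero.pos w
  have ht : 0 < t := NeZero.pos t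
  obtain ⟨c, hc⟩ := h
  by_cases hq0 : q = 0
  · subst hq0
    have hval : ((0:ZMod (w*t)) - 1).val = w * t - 1 := by
      rw [val_sub_one, if_pos rfl]
    rw [slowZ, slowZ, hval, ZMod.val_zero]
    have hsplit : w * t - 1 = w * (t - 1) + (w - 1) := by
      rcases Nat.exists_eq_succ_of_ne_zero ht.ne' with ⟨t', rfl⟩
      rw [Nat.mul_succ, Nat.succ_sub_one]
      omega
    rw [hsplit, Nat.mul_add_div hw, Nat.div_eq_of_lt (by omega), Nat.add_zero,
      Nat.zero_div, Nat.cast_zero, zero_sub, Nat.cast_sub (by omega), Nat.cast_one]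
    simp
  · have hv0 : q.val ≠ 0 := by
      intro h0; exact hq0 (by rw [← ZMod.natCast_rightInverse q, h0, Nat.cast_zero])
    have hc1 : 1 ≤ c := by
      rcases Nat.eq_zero_or_pos c with h0 | h1
      · exfalso; apply hv0; rw [hc, h0, Nat.mul_zero]
      · exact h1
    have hval : (q - 1).val = q.val - 1 := by rw [val_sub_one, if_neg hq0]
    rw [slowZ, slowZ, hval, hc]
    have h2 : w * c - 1 = w * (c - 1) + (w - 1) := by
      rcases Nat.exists_eq_succ_of_ne_zero (by omega : c ≠ 0) with ⟨c', rfl⟩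
      rw [Nat.mul_succ, Nat.succ_sub_one]
      omega
    rw [h2, Nat.mul_add_div hw, Nat.div_eq_of_lt (by omega), Nat.add_zero,
      Nat.mul_div_cancel_left _ hw, Nat.cast_sub hc1, Nat.cast_one]

/-- split of the cyclic index -/
def splitZ : ZMod (w * t) ≃ ZMod w × ZMod t where
  toFun q := (fastZ w t q, slowZ w t q)
  invFun p := ((p.1.val + w * p.2.val : ℕ) : ZMod (w * t))
  left_inv q := by
    have hw : 0 < w := NeZero.pos w
    have hlt : q.val < w * t := ZMod.val_lt q
    have h1 : (fastZ w t q).val = q.val % w := by rw [fastZ, ZMod.val_natCast]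
    have hdiv : q.val / w < t := Nat.div_lt_of_lt_mul hlt
    have h2 : (slowZ w t q).val = q.val / w := by
      rw [slowZ, ZMod.val_natCast, Nat.mod_eq_of_lt hdiv]
    show (((fastZ w t q).val + w * (slowZ w t q).val : ℕ) : ZMod (w * t)) = q
    rw [h1, h2, Nat.mod_add_div]
    exact ZMod.natCast_rightInverse q
  right_inv p := by
    obtain ⟨s, j⟩ := p
    have hw : 0 < w := NeZero.pos w
    have hs : s.val < w := ZMod.val_lt s
    have hj : j.val < t := ZMod.val_lt j
    have hv : s.val + w * j.val < w * t := by
      calc s.val + w * j.val < w + w * j.val := by omega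
        _ = w * (j.val + 1) := by ring
        _ ≤ w * t := Nat.mul_le_mul_left w (by omega)
    have hval : ((s.val + w * j.val : ℕ) : ZMod (w * t)).val = s.val + w * j.val := by
      rw [ZMod.val_natCast, Nat.mod_eq_of_lt hv]
    refine Prod.ext ?_ ?_
    · show fastZ w t _ = s
      rw [fastZ, hval]
      push_cast [ZMod.natCast_self]
      simp [ZMod.natCast_rightInverse s]
    · show slowZ w t _ = j
      rw [slowZ, hval]
      rw [Nat.add_mul_div_left _ _ hw, Nat.div_eq_of_lt hs, Nat.zero_add]
      exact ZMod.natCast_rightInverse j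

@[simp] lemma splitZ_apply (q : ZMod (w * t)) : splitZ w t q = (fastZ w t q, slowZ w t q) := rfl

end Index

set_option linter.unusedSectionVars false

section ModCases

lemma nat_mod_small_cases (d A : ℕ) (h : A < 2*d) :
    (A < d ∧ A % d = A) ∨ (d ≤ A ∧ A % d = A - d) := by
  rcases lt_or_ge A d with h1 | h1
  · exact Or.inl ⟨h1, Nat.mod_eq_of_lt h1⟩
  · refine Or.inr ⟨h1, ?_⟩
    have h2 : A - d < d := by omega
    rw [Nat.mod_eq_sub_mod h1, Nat.mod_eq_of_lt h2]

lemma zmod_natCast_eq_cases {d A B : ℕ} [NeZero d] (hA : A < 2*d) (hB : B < 2*d)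
    (h : (A : ZMod d) = (B : ZMod d)) : A = B ∨ A = B + d ∨ B = A + d := by
  rw [ZMod.natCast_eq_natCast_iff] at h
  have h' : A % d = B % d := h
  rcases nat_mod_small_cases d A hA with ⟨e0, e1⟩ | ⟨e0, e1⟩ <;>
    rcases nat_mod_small_cases d B hB with ⟨f0, f1⟩ | ⟨f0, f1⟩ <;>
      rw [e1, f1] at h' <;> omega

end ModCases

section Gadget

/-- twist data on the cyclic group `ZMod d` used in the composition step -/
structure Gadget (d : ℕ) [NeZero d] where
  c : Bool → ZMod d → ZMod d
  dl : ZMod d → Bool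
  E : Bool → (ZMod d ≃ ZMod d)
  hE : ∀ ε j, E ε j = 2 * j + c ε j
  Phi : Bool × ZMod d ≃ ZMod d × Bool
  hPhi : ∀ ε j, Phi (ε, j) = (j + c ε j, xor ε (dl j))

noncomputable def Gadget.ofBij {d : ℕ} [NeZero d] (c : Bool → ZMod d → ZMod d)
    (dl : ZMod d → Bool)
    (hE : ∀ ε, Function.Bijective (fun j : ZMod d => 2 * j + c ε j))
    (hΦ : Function.Bijective
      (fun p : Bool × ZMod d => (p.2 + c p.1 p.2, xor p.1 (dl p.2)))) : Gadget d :=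
  ⟨c, dl, fun ε => Equiv.ofBijective _ (hE ε), fun _ _ => rfl,
    Equiv.ofBijective _ hΦ, fun _ _ => rfl⟩

/-! ### the odd gadget -/

def oddC (d : ℕ) : Bool → ZMod d → ZMod d := fun ε _ => if ε then 1 else 0

lemma odd_E_bij (e : ℕ) (ε : Bool) :
    haveI : NeZero (2*e+1) := ⟨by omega⟩
    Function.Bijective (fun j : ZMod (2*e+1) => 2 * j + oddC (2*e+1) ε j) := by
  haveI : NeZero (2*e+1) := ⟨by omega⟩
  rw [← Finite.injective_iff_bijective]
  intro j1 j2 h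
  simp only [oddC, add_left_inj] at h
  have hj1 : ((j1.val : ℕ) : ZMod (2*e+1)) = j1 := ZMod.natCast_rightInverse j1
  have hj2 : ((j2.val : ℕ) : ZMod (2*e+1)) = j2 := ZMod.natCast_rightInverse j2
  have hx : j1.val < 2*e+1 := ZMod.val_lt j1
  have hy : j2.val < 2*e+1 := ZMod.val_lt j2
  rw [← hj1, ← hj2]
  congr 1
  have h' : ((2 * j1.val : ℕ) : ZMod (2*e+1)) = ((2 * j2.val : ℕ) : ZMod (2*e+1)) := by
    push_cast [hj1, hj2]
    exact h
  rcases zmod_natCast_eq_cases (by omega) (by omega) h' with hc | hc | hc <;> omega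

lemma odd_Phi_bij (e : ℕ) :
    haveI : NeZero (2*e+1) := ⟨by omega⟩
    Function.Bijective (fun p : Bool × ZMod (2*e+1) =>
      (p.2 + oddC (2*e+1) p.1 p.2, xor p.1 ((fun _ => false) p.2))) := by
  haveI : NeZero (2*e+1) := ⟨by omega⟩
  refine (Fintype.bijective_iff_injective_and_card _).mpr ⟨?_, by simp [mul_comm]⟩
  rintro ⟨ε1, j1⟩ ⟨ε2, j2⟩ h
  simp only [Bool.xor_false, Prod.mk.injEq, oddC] at h
  obtain ⟨h1, h2⟩ := h
  subst h2
  simpa using h1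

noncomputable def oddGadget (e : ℕ) :
    haveI : NeZero (2*e+1) := ⟨by omega⟩; Gadget (2*e+1) :=
  haveI : NeZero (2*e+1) := ⟨by omega⟩
  Gadget.ofBij (oddC (2*e+1)) (fun _ => false) (odd_E_bij e) (odd_Phi_bij e)

/-! ### the even gadget -/

def cNat (e v : ℕ) (ε : Bool) : ℕ :=
  if e ≤ v then (if ε then 0 else 1) else (if ε then 1 else 0)

lemma cNat_le_one (e v : ℕ) (ε : Bool) : cNat e v ε ≤ 1 := by
  unfold cNat; split_ifs <;> norm_num

def evenC (d e : ℕ) [NeZero d] : Bool → ZMod d → ZMod d := fun ε j =>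
  ((cNat e j.val ε : ℕ) : ZMod d)

def evenDl (d e : ℕ) [NeZero d] : ZMod d → Bool := fun j => decide (e ≤ j.val)

lemma even_E_bij (e : ℕ) (he : 0 < e) (ε : Bool) :
    haveI : NeZero (2*e) := ⟨by omega⟩
    Function.Bijective (fun j : ZMod (2*e) => 2 * j + evenC (2*e) e ε j) := by
  haveI : NeZero (2*e) := ⟨by omega⟩
  rw [← Finite.injective_iff_bijective]
  intro j1 j2 h
  have hj1 : ((j1.val : ℕ) : ZMod (2*e)) = j1 := ZMod.natCast_rightInverse j1
  have hj2 : ((j2.val : ℕ) : ZMod (2*e)) = j2 := ZMod.natCast_rightInverse j2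
  have hx : j1.val < 2*e := ZMod.val_lt j1
  have hy : j2.val < 2*e := ZMod.val_lt j2
  rw [← hj1, ← hj2]
  congr 1
  have h' : ((2 * j1.val + cNat e j1.val ε : ℕ) : ZMod (2*e))
      = ((2 * j2.val + cNat e j2.val ε : ℕ) : ZMod (2*e)) := by
    push_cast [hj1, hj2]
    exact h
  have k1 := cNat_le_one e j1.val ε
  have k2 := cNat_le_one e j2.val ε
  rcases zmod_natCast_eq_cases (by omega) (by omega) h' with hc | hc | hc <;>
    (unfold cNat at hc; split_ifs at hc <;> omega)

lemma even_Phi_bij (e : ℕ) (he : 0 < e) :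
    haveI : NeZero (2*e) := ⟨by omega⟩
    Function.Bijective (fun p : Bool × ZMod (2*e) =>
      (p.2 + evenC (2*e) e p.1 p.2, xor p.1 (evenDl (2*e) e p.2))) := by
  haveI : NeZero (2*e) := ⟨by omega⟩
  refine (Fintype.bijective_iff_injective_and_card _).mpr ⟨?_, by simp [mul_comm]⟩
  rintro ⟨ε1, j1⟩ ⟨ε2, j2⟩ h
  simp only [Prod.mk.injEq, evenDl] at h
  obtain ⟨ha, hb⟩ := h
  have hj1 : ((j1.val : ℕ) : ZMod (2*e)) = j1 := ZMod.natCast_rightInverse j1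
  have hj2 : ((j2.val : ℕ) : ZMod (2*e)) = j2 := ZMod.natCast_rightInverse j2
  have hx : j1.val < 2*e := ZMod.val_lt j1
  have hy : j2.val < 2*e := ZMod.val_lt j2
  have h' : ((j1.val + cNat e j1.val ε1 : ℕ) : ZMod (2*e))
      = ((j2.val + cNat e j2.val ε2 : ℕ) : ZMod (2*e)) := by
    unfold evenC at ha
    push_cast [hj1, hj2]
    exact ha
  have k1 := cNat_le_one e j1.val ε1
  have k2 := cNat_le_one e j2.val ε2
  have hvv : j1.val = j2.val ∧ ε1 = ε2 := by
    rcases zmod_natCast_eq_cases (by omega) (by omega) h' with hc | hc | hc <;>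
      cases ε1 <;> cases ε2 <;>
        by_cases h1 : e ≤ j1.val <;> by_cases h2 : e ≤ j2.val <;>
          first
            | (exfalso; revert hb; simp [h1, h2]; done)
            | (refine ⟨?_, rfl⟩; simp [cNat, h1, h2] at hc <;> omega)
            | (exfalso; simp [cNat, h1, h2] at hc <;> omega)
  obtain ⟨hv, hee⟩ := hvv
  subst hee
  rw [Prod.mk.injEq]
  exact ⟨rfl, by rw [← hj1, ← hj2, hv]⟩

noncomputable def evenGadget (e : ℕ) (he : 0 < e) :
    haveI : NeZero (2*e) := ⟨by omega⟩; Gadget (2*e) :=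
  haveI : NeZero (2*e) := ⟨by omega⟩
  Gadget.ofBij (evenC (2*e) e) (evenDl (2*e) e) (even_E_bij e he) (even_Phi_bij e he)

end Gadget

section Harm2

/-- A doubled harmonious design on a finite group. -/
structure Harm2 (K : Type*) [Group K] [Fintype K] where
  A : ZMod (2 * Fintype.card K) ≃ K × Bool
  B : ZMod (2 * Fintype.card K) ≃ K × Bool
  C : ZMod (2 * Fintype.card K) ≃ K × Bool
  D : ZMod (2 * Fintype.card K) ≃ K × Bool
  hC : ∀ s, (A s).1 * (B s).1 = (C s).1
  hD : ∀ s, (B (s - 1)).1 * (A s).1 = (D s).1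

noncomputable def harm2Base (K : Type*) [Group K] [Fintype K]
    (h1 : Fintype.card K = 1) : Harm2 K := by
  haveI : Subsingleton K := Fintype.card_le_one_iff_subsingleton.mp (le_of_eq h1)
  haveI : NeZero (2 * Fintype.card K) := ⟨by omega⟩
  have hcard : Fintype.card (ZMod (2 * Fintype.card K)) = Fintype.card (K × Bool) := by
    rw [ZMod.card, Fintype.card_prod, Fintype.card_bool, h1]
  exact ⟨Fintype.equivOfCardEq hcard, Fintype.equivOfCardEq hcard,
    Fintype.equivOfCardEq hcard, Fintype.equivOfCardEq hcard,
    fun _ => Subsingleton.elim _ _, fun _ => Subsingleton.elim _ _⟩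

noncomputable def Harm2.congr {K L : Type*} [Group K] [Fintype K] [Group L] [Fintype L]
    (e : K ≃* L) (S : Harm2 K) : Harm2 L := by
  have h : 2 * Fintype.card L = 2 * Fintype.card K := by
    rw [Fintype.card_congr e.toEquiv]
  refine
    { A := (ZMod.ringEquivCongr h).toEquiv.trans
        (S.A.trans (Equiv.prodCongr e.toEquiv (Equiv.refl Bool)))
      B := (ZMod.ringEquivCongr h).toEquiv.trans
        (S.B.trans (Equiv.prodCongr e.toEquiv (Equiv.refl Bool)))
      C := (ZMod.ringEquivCongr h).toEquiv.trans
        (S.C.trans (Equiv.prodCongr e.toEquiv (Equiv.refl Bool)))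
      D := (ZMod.ringEquivCongr h).toEquiv.trans
        (S.D.trans (Equiv.prodCongr e.toEquiv (Equiv.refl Bool)))
      hC := fun s => ?_
      hD := fun s => ?_ }
  · simp only [Equiv.trans_apply, Equiv.prodCongr_apply, RingEquiv.toEquiv_eq_coe,
      EquivLike.coe_coe, Prod.map_fst, MulEquiv.coe_toEquiv]
    exact (map_mul e _ _).symm.trans (congrArg e (S.hC _))
  · have hR : (ZMod.ringEquivCongr h) (s - 1) = (ZMod.ringEquivCongr h) s - 1 := by
      rw [map_sub, map_one]
    simp only [Equiv.trans_apply, Equiv.prodCongr_apply, RingEquiv.toEquiv_eq_coe,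
      EquivLike.coe_coe, Prod.map_fst, MulEquiv.coe_toEquiv]
    rw [hR]
    exact (map_mul e _ _).symm.trans (congrArg e (S.hD _))

/-- reassembly equivalences -/
def asmb1 {α γ : Type*} : (α × Bool) × γ ≃ (α × Multiplicative γ) × Bool where
  toFun p := ((p.1.1, Multiplicative.ofAdd p.2), p.1.2)
  invFun p := ((p.1.1, p.2), Multiplicative.toAdd p.1.2)
  left_inv p := rfl
  right_inv p := rfl

def asmb2 {α γ : Type*} : α × (γ × Bool) ≃ (α × Multiplicative γ) × Bool where
  toFun p := ((p.1, Multiplicative.ofAdd p.2.1), p.2.2)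
  invFun p := (p.1.1, (Multiplicative.toAdd p.1.2, p.2))
  left_inv p := rfl
  right_inv p := rfl

@[simp] lemma asmb1_apply {α γ : Type*} (p : (α × Bool) × γ) :
    (asmb1 p : (α × Multiplicative γ) × Bool) = ((p.1.1, Multiplicative.ofAdd p.2), p.1.2) := rfl

@[simp] lemma asmb2_apply {α γ : Type*} (p : α × (γ × Bool)) :
    (asmb2 p : (α × Multiplicative γ) × Bool) = ((p.1, Multiplicative.ofAdd p.2.1), p.2.2) := rfl

section Comp

variable {K : Type*} [Group K] [Fintype K] (S : Harm2 K) (d : ℕ) [NeZero d] (g : Gadget d)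

noncomputable def Harm2.comp : Harm2 (K × Multiplicative (ZMod d)) := by
  haveI : Nonempty K := One.instNonempty
  have hk : 0 < Fintype.card K := Fintype.card_pos
  haveI : NeZero (2 * Fintype.card K) := ⟨by omega⟩
  have hcard : 2 * Fintype.card (K × Multiplicative (ZMod d))
      = (2 * Fintype.card K) * d := by
    rw [Fintype.card_prod]
    rw [show Fintype.card (Multiplicative (ZMod d)) = d from by
      rw [Fintype.card_congr Multiplicative.toAdd, ZMod.card]]
    ring
  set w := 2 * Fintype.card K with hw
  let R := (ZMod.ringEquivCongr hcard).toEquiv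
  refine
    { A := R.trans ((splitZ w d).trans
        ((prodTwist S.A (fun _ => Equiv.refl (ZMod d))).trans asmb1))
      B := R.trans ((splitZ w d).trans
        (((prodTwist S.B (fun _ => Equiv.refl (ZMod d))).trans
          ((Equiv.prodAssoc K Bool (ZMod d)).trans
            ((Equiv.refl K).prodCongr g.Phi))).trans asmb2))
      C := R.trans ((splitZ w d).trans
        ((prodTwist S.C (fun s => g.E (S.B s).2)).trans asmb1))
      D := R.trans ((splitZ w d).trans
        ((prodTwist S.D (fun s =>
          if s = 0 then
            (Equiv.subRight (1 : ZMod d)).trans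
              ((g.E (S.B (s - 1)).2).trans (Equiv.addRight (1 : ZMod d)))
          else g.E (S.B (s - 1)).2)).trans asmb1))
      hC := fun q => ?_
      hD := fun q => ?_ }
  · -- hC
    simp only [Equiv.trans_apply, splitZ_apply, prodTwist_apply, asmb1_apply, asmb2_apply,
      Equiv.prodAssoc_apply, Equiv.prodCongr_apply, Equiv.coe_refl, Prod.map_apply, id_eq]
    refine Prod.ext ?_ ?_
    · exact S.hC _
    · show Multiplicative.ofAdd _ * Multiplicative.ofAdd _ = Multiplicative.ofAdd _
      rw [← ofAdd_add]
      congr 1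
      rw [g.hPhi, g.hE]
      dsimp only
      ring
  · -- hD
    have hR1 : (ZMod.ringEquivCongr hcard) (q - 1) = (ZMod.ringEquivCongr hcard) q - 1 := by
      rw [map_sub, map_one]
    simp only [R, Equiv.trans_apply, splitZ_apply, prodTwist_apply, asmb1_apply, asmb2_apply,
      Equiv.prodAssoc_apply, Equiv.prodCongr_apply, Equiv.coe_refl, Prod.map_apply, id_eq,
      RingEquiv.toEquiv_eq_coe, EquivLike.coe_coe]
    rw [hR1, fastZ_sub_one]
    by_cases hs : fastZ w d ((ZMod.ringEquivCongr hcard) q) = 0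
    · rw [slowZ_sub_one_of_eq w d _ hs]
      refine Prod.ext (S.hD _) ?_
      show Multiplicative.ofAdd _ * Multiplicative.ofAdd _ = Multiplicative.ofAdd _
      rw [← ofAdd_add]
      congr 1
      rw [if_pos hs]
      simp only [Equiv.trans_apply, Equiv.subRight_apply, Equiv.coe_addRight]
      rw [g.hPhi, g.hE]
      dsimp only
      ring
    · rw [slowZ_sub_one_of_ne w d _ hs]
      refine Prod.ext (S.hD _) ?_
      show Multiplicative.ofAdd _ * Multiplicative.ofAdd _ = Multiplicative.ofAdd _
      rw [← ofAdd_add]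
      congr 1
      rw [if_neg hs]
      rw [g.hPhi, g.hE]
      dsimp only
      ring

end Comp

end Harm2

section Universal

lemma card_mult_zmod (d : ℕ) [NeZero d] : Fintype.card (Multiplicative (ZMod d)) = d := by
  rw [Fintype.card_congr Multiplicative.toAdd, ZMod.card]

def Gadget.castEq {d d' : ℕ} [NeZero d] [NeZero d'] (h : d = d') (g : Gadget d) :
    Gadget d' := by subst h; exact g

noncomputable def anyGadget (d : ℕ) [NeZero d] : Gadget d := by
  by_cases he : Even d
  · have hm : d % 2 = 0 := Nat.even_iff.mp he
    have h2 : 2 * (d / 2) = d := by omega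
    have hpos : 0 < d / 2 := by have := NeZero.pos d; omega
    haveI : NeZero (2 * (d / 2)) := ⟨by omega⟩
    exact Gadget.castEq h2 (evenGadget (d / 2) hpos)
  · have hm : d % 2 = 1 := Nat.odd_iff.mp (Nat.not_even_iff_odd.mp he)
    have h2 : 2 * (d / 2) + 1 = d := by omega
    haveI : NeZero (2 * (d / 2) + 1) := ⟨by omega⟩
    exact Gadget.castEq h2 (oddGadget (d / 2))

lemma harm2_exists_aux : ∀ (N : ℕ) (K : Type) [CommGroup K] [Fintype K],
    Fintype.card K ≤ N → Nonempty (Harm2 K) := by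
  intro N
  induction N with
  | zero =>
    intro K _ _ hle
    exact absurd (Fintype.card_pos (α := K)) (by omega)
  | succ N ih =>
    intro K _ _ hle
    by_cases hone : Fintype.card K = 1
    · exact ⟨harm2Base K hone⟩
    · obtain ⟨ι, hι, n, hn, ⟨e⟩⟩ := CommGroup.equiv_prod_multiplicative_zmod_of_finite K
      haveI := hι
      haveI : ∀ i, NeZero (n i) := fun i => ⟨by have := hn i; omega⟩
      haveI : DecidableEq ι := Classical.decEq ι
      haveI : Nonempty ι := by
        by_contra hne
        haveI : IsEmpty ι := not_nonempty_iff.mp hne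
        exact hone (by rw [Fintype.card_congr e.toEquiv, Fintype.card_unique])
      set i₀ := Classical.arbitrary ι with hi₀
      let splitE := Equiv.piSplitAt i₀ (fun i => Multiplicative (ZMod (n i)))
      let splitM : ((i : ι) → Multiplicative (ZMod (n i))) ≃*
          (Multiplicative (ZMod (n i₀)) ×
            ((j : {j // j ≠ i₀}) → Multiplicative (ZMod (n j)))) :=
        MulEquiv.mk' splitE (fun f g => rfl)
      set K1 := (j : {j // j ≠ i₀}) → Multiplicative (ZMod (n j)) with hK1
      have cardK : Fintype.card K = n i₀ * Fintype.card K1 := by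
        rw [Fintype.card_congr (e.trans splitM).toEquiv, Fintype.card_prod, card_mult_zmod]
      have hc1 : 1 ≤ Fintype.card K1 := Fintype.card_pos
      have h2 : 2 * Fintype.card K1 ≤ n i₀ * Fintype.card K1 :=
        Nat.mul_le_mul_right _ (hn i₀)
      have hK1N : Fintype.card K1 ≤ N := by omega
      obtain ⟨S1⟩ := ih K1 hK1N
      have S2 : Harm2 (K1 × Multiplicative (ZMod (n i₀))) := S1.comp (n i₀) (anyGadget (n i₀))
      exact ⟨S2.congr ((MulEquiv.prodComm).trans (splitM.symm.trans e.symm))⟩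

lemma harm2_exists (H : Type*) [CommGroup H] [Fintype H] : Nonempty (Harm2 H) := by
  obtain ⟨ι, hι, n, hn, ⟨e⟩⟩ := CommGroup.equiv_prod_multiplicative_zmod_of_finite H
  haveI := hι
  haveI : ∀ i, NeZero (n i) := fun i => ⟨by have := hn i; omega⟩
  haveI : DecidableEq ι := Classical.decEq ι
  obtain ⟨S⟩ := harm2_exists_aux (Fintype.card ((i : ι) → Multiplicative (ZMod (n i)))) _ le_rfl
  exact ⟨S.congr e.symm⟩

end Universal

/-- **Even harmonious times abelian is doubly harmonious.**
If `G` is a finite group of even order admitting a harmonious sequence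
(a cyclic listing `g` of all elements of `G` whose consecutive products
`g (i-1) * g i` also list all elements of `G`), and `H` is a finite abelian
group, then `G × H` admits a doubly harmonious sequence: a cyclic sequence of
length `2 * |G × H|` in which every element appears exactly twice among the
terms and exactly twice among the cyclic consecutive products. -/
theorem doubly_harmonious_prod_of_even_harmonious
    (G H : Type*) [Group G] [Fintype G] [CommGroup H] [Fintype H]
    (heven : Even (Fintype.card G))
    (hharm : ∃ g : ZMod (Fintype.card G) → G,
      Function.Bijective g ∧
      Function.Bijective (fun i : ZMod (Fintype.card G) => g (i - 1) * g i)) :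
    ∃ u : ZMod (2 * Fintype.card (G × H)) → G × H,
      (∀ a : G × H, Nat.card {i : ZMod (2 * Fintype.card (G × H)) // u i = a} = 2) ∧
      (∀ a : G × H, Nat.card {i : ZMod (2 * Fintype.card (G × H)) // u (i - 1) * u i = a} = 2) := by
  classical
  set n := Fintype.card G with hn
  set m := Fintype.card H with hm
  obtain ⟨gmap, hg, hgh⟩ := hharm
  obtain ⟨S⟩ := harm2_exists H
  haveI : NeZero n := ⟨(Fintype.card_pos (α := G)).ne'⟩
  haveI : NeZero (2 * m) := ⟨by have := Fintype.card_pos (α := H); omega⟩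
  have hcard : 2 * Fintype.card (G × H) = n * (2 * m) := by
    rw [Fintype.card_prod]; ring
  set R := ZMod.ringEquivCongr hcard with hR
  let Geq : ZMod n ≃ G := Equiv.ofBijective gmap hg
  let Ghat : ZMod n ≃ G := Equiv.ofBijective _ hgh
  let U : ZMod (2 * Fintype.card (G × H)) ≃ (G × H) × Bool :=
    R.toEquiv.trans ((splitZ n (2 * m)).trans
      ((prodTwist Geq (fun r => if Even r.val then S.A else S.B)).trans
        (Equiv.prodAssoc G H Bool).symm))
  let V : ZMod (2 * Fintype.card (G × H)) ≃ (G × H) × Bool :=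
    R.toEquiv.trans ((splitZ n (2 * m)).trans
      ((prodTwist Ghat (fun r => if r = 0 then S.D else S.C)).trans
        (Equiv.prodAssoc G H Bool).symm))
  set u : ZMod (2 * Fintype.card (G × H)) → G × H := fun i => (U i).1 with hu
  have hV : ∀ i, (V i).1 = u (i - 1) * u i := by
    intro i
    have hR1 : R (i - 1) = R i - 1 := by rw [map_sub, map_one]
    simp only [hu, U, V, Equiv.trans_apply, splitZ_apply, prodTwist_apply,
      Equiv.prodAssoc_symm_apply, RingEquiv.toEquiv_eq_coe, EquivLike.coe_coe,
      hR1, fastZ_sub_one]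
    by_cases hr : fastZ n (2 * m) (R i) = 0
    · rw [slowZ_sub_one_of_eq n (2 * m) _ hr, hr]
      have h0 : Even (0 : ZMod n).val := by simp [ZMod.val_zero]
      have h1 : ¬ Even ((0 : ZMod n) - 1).val := by
        rw [val_sub_one, if_pos rfl]
        obtain ⟨nh, hnh⟩ := heven
        have hp := NeZero.pos n
        rw [Nat.even_iff]
        omega
      rw [if_pos h0, if_neg h1, if_pos rfl]
      refine Prod.ext ?_ ?_
      · simp only [Prod.fst_mul]; rfl
      · simp only [Prod.snd_mul]; exact (S.hD _).symm
    · rw [slowZ_sub_one_of_ne n (2 * m) _ hr, if_neg hr]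
      have hvne : (fastZ n (2 * m) (R i)).val ≠ 0 :=
        fun hh => hr ((ZMod.val_eq_zero _).mp hh)
      have hval : (fastZ n (2 * m) (R i) - 1).val = (fastZ n (2 * m) (R i)).val - 1 := by
        rw [val_sub_one, if_neg hr]
      by_cases hpar : Even (fastZ n (2 * m) (R i)).val
      · have hpar1 : ¬ Even (fastZ n (2 * m) (R i) - 1).val := by
          rw [hval, Nat.even_iff] at *
          omega
        rw [if_pos hpar, if_neg hpar1]
        refine Prod.ext ?_ ?_
        · simp only [Prod.fst_mul]; rfl
        · simp only [Prod.snd_mul]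
          exact (S.hC _).symm.trans (mul_comm _ _)
      · have hpar1 : Even (fastZ n (2 * m) (R i) - 1).val := by
          rw [hval, Nat.even_iff] at *
          omega
        rw [if_neg hpar, if_pos hpar1]
        refine Prod.ext ?_ ?_
        · simp only [Prod.fst_mul]; rfl
        · simp only [Prod.snd_mul]; exact (S.hC _).symm
  refine ⟨u, fun a => card_fiber_eq_two U u (fun i => rfl) a, fun a => ?_⟩
  exact card_fiber_eq_two V (fun i => u (i - 1) * u i) hV a
end

section
/- For every integer n > 3 there exists a special doubly harmonious sequence in ℤ_n ∖ {0}; that is, there exists a sequence g_0, g_1, …, g_m (with m = 2(n-1) - 1) in ℤ_n ∖ {0} in which each nonzero element of ℤ_n appears exactly twice, such that each nonzero element of ℤ_n appears exactly twice among the cyclic consecutive sums ĝ_0 = g_m + g_0 and ĝ_i = g_{i-1} + g_i for 1 ≤ i ≤ m, and additionally g_0 + g_{m-1} = 0 and g_{m-2} + g_{m-1} = g_m. -/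
private lemma two_regular {ι β : Type*} [Fintype ι] [DecidableEq β]
    (f : ι → β) (V : Finset β)
    (hcard : Fintype.card ι = 2 * V.card)
    (i1 i2 : β → ι)
    (h1 : ∀ a ∈ V, f (i1 a) = a) (h2 : ∀ a ∈ V, f (i2 a) = a)
    (hne : ∀ a ∈ V, i1 a ≠ i2 a) :
    ∀ a ∈ V, Nat.card {i : ι // f i = a} = 2 := by
  classical
  set φ : (↥V × Bool) → ι := fun p => if p.2 then i1 p.1 else i2 p.1 with hφ
  have hfφ : ∀ p : ↥V × Bool, f (φ p) = (p.1 : β) := by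
    rintro ⟨⟨c, hc⟩, b⟩
    cases b
    · simpa [φ] using h2 c hc
    · simpa [φ] using h1 c hc
  have hinj : Function.Injective φ := by
    rintro ⟨⟨c, hc⟩, b⟩ ⟨⟨d, hd⟩, b'⟩ h
    have hcd : c = d := by
      have h1' := hfφ ⟨⟨c, hc⟩, b⟩
      have h2' := hfφ ⟨⟨d, hd⟩, b'⟩
      rw [h, h2'] at h1'
      exact h1'.symm
    subst hcd
    have hbb : b = b' := by
      cases b <;> cases b' <;> first
        | rfl
        | · exfalso
            apply hne c hc
            simp only [φ, if_true, if_false, Bool.false_eq_true] at h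
            first | exact h | exact h.symm
    subst hbb; rfl
  have hbij : Function.Bijective φ :=
    (Fintype.bijective_iff_injective_and_card φ).2 ⟨hinj, by
      simp [Fintype.card_prod, Fintype.card_coe, hcard, mul_comm]⟩
  intro a ha
  have e1 : {p : ↥V × Bool // (p.1 : β) = a} ≃ {i : ι // f i = a} :=
    (Equiv.ofBijective φ hbij).subtypeEquiv (fun p => by
      rw [show (Equiv.ofBijective φ hbij) p = φ p from rfl, hfφ p])
  have e2 : {p : ↥V × Bool // (p.1 : β) = a} ≃ Bool :=
    { toFun := fun p => p.1.2
      invFun := fun b => ⟨(⟨a, ha⟩, b), rfl⟩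
      left_inv := by rintro ⟨⟨⟨c, hc⟩, b⟩, h⟩; simp only at h; subst h; rfl
      right_inv := fun b => rfl }
  rw [← Nat.card_congr e1, Nat.card_congr e2, Nat.card_eq_fintype_card]
  simp

private lemma pred_mod (L x : ℕ) (h1 : 1 ≤ x) (h2 : x < L) :
    (x + (L - 1)) % L = x - 1 := by
  have h3 : x + (L - 1) = (x - 1) + 1 * L := by omega
  rw [h3, Nat.add_mul_mod_self_right, Nat.mod_eq_of_lt (by omega)]

private lemma pred_mod0 (L : ℕ) (h : 1 ≤ L) : (0 + (L - 1)) % L = L - 1 := by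
  rw [Nat.zero_add, Nat.mod_eq_of_lt (by omega)]

private lemma aux (n : ℕ) (hn : 4 ≤ n) (f t1 t2 s1 s2 : ℕ → ℕ)
    (hf : ∀ x, x < 2 * (n - 1) → 1 ≤ f x ∧ f x < n)
    (ht : ∀ a, a < n → 1 ≤ a → t1 a < 2 * (n - 1) ∧ t2 a < 2 * (n - 1) ∧ t1 a ≠ t2 a ∧
        f (t1 a) = a ∧ f (t2 a) = a)
    (hs : ∀ a, a < n → 1 ≤ a → s1 a < 2 * (n - 1) ∧ s2 a < 2 * (n - 1) ∧ s1 a ≠ s2 a ∧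
        (f ((s1 a + (2 * (n - 1) - 1)) % (2 * (n - 1))) + f (s1 a) = a ∨
         f ((s1 a + (2 * (n - 1) - 1)) % (2 * (n - 1))) + f (s1 a) = a + n) ∧
        (f ((s2 a + (2 * (n - 1) - 1)) % (2 * (n - 1))) + f (s2 a) = a ∨
         f ((s2 a + (2 * (n - 1) - 1)) % (2 * (n - 1))) + f (s2 a) = a + n))
    (hsp1 : f 0 + f (2 * (n - 1) - 2) = n)
    (hsp2 : f (2 * (n - 1) - 3) + f (2 * (n - 1) - 2) = n + f (2 * (n - 1) - 1)) :
    ∃ g : ZMod (2 * (n - 1)) → ZMod n,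
      (∀ i, g i ≠ 0) ∧
      (∀ a : ZMod n, a ≠ 0 → Nat.card {i : ZMod (2 * (n - 1)) // g i = a} = 2) ∧
      (∀ a : ZMod n, a ≠ 0 → Nat.card {i : ZMod (2 * (n - 1)) // g (i - 1) + g i = a} = 2) ∧
      g 0 + g (-2) = 0 ∧
      g (-3) + g (-2) = g (-1) := by
  haveI : NeZero (2 * (n - 1)) := ⟨by omega⟩
  haveI : NeZero n := ⟨by omega⟩
  have hcastval : ∀ x : ℕ, x < 2 * (n - 1) → ((x : ZMod (2 * (n - 1)))).val = x :=
    fun x hx => ZMod.val_cast_of_lt hx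
  have hvalbound : ∀ a : ZMod n, a ≠ 0 → 1 ≤ a.val ∧ a.val < n := by
    intro a ha
    refine ⟨?_, ZMod.val_lt a⟩
    rcases Nat.eq_zero_or_pos a.val with h | h
    · exact absurd ((ZMod.val_eq_zero a).1 h) ha
    · exact h
  have hV : (Finset.univ.filter (fun b : ZMod n => b ≠ 0)).card = n - 1 := by
    rw [Finset.filter_ne', Finset.card_erase_of_mem (Finset.mem_univ _), Finset.card_univ,
      ZMod.card]
  have hcard2 : Fintype.card (ZMod (2 * (n - 1)))
      = 2 * (Finset.univ.filter (fun b : ZMod n => b ≠ 0)).card := by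
    rw [ZMod.card, hV]
  have hmemV : ∀ a : ZMod n, a ≠ 0 → a ∈ Finset.univ.filter (fun b : ZMod n => b ≠ 0) :=
    fun a ha => Finset.mem_filter.2 ⟨Finset.mem_univ _, ha⟩
  have hVne : ∀ b ∈ Finset.univ.filter (fun b : ZMod n => b ≠ 0), b ≠ 0 :=
    fun b hb => (Finset.mem_filter.1 hb).2
  have hm1 : ∀ x : ℕ, ((x : ZMod (2 * (n - 1))) - 1)
      = (((x + (2 * (n - 1) - 1)) % (2 * (n - 1)) : ℕ) : ZMod (2 * (n - 1))) := by
    intro x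
    rw [ZMod.natCast_mod, Nat.cast_add, Nat.cast_sub (by omega : 1 ≤ 2 * (n - 1)),
      ZMod.natCast_self, Nat.cast_one]
    ring
  have hneg : ∀ c : ℕ, c ≤ 2 * (n - 1) →
      ((2 * (n - 1) - c : ℕ) : ZMod (2 * (n - 1))) = -(c : ZMod (2 * (n - 1))) := by
    intro c hc
    have h : ((2 * (n - 1) - c : ℕ) : ZMod (2 * (n - 1))) + ((c : ℕ) : ZMod (2 * (n - 1)))
        = ((2 * (n - 1) : ℕ) : ZMod (2 * (n - 1))) := by
      rw [← Nat.cast_add]; congr 1; omega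
    rw [ZMod.natCast_self] at h
    exact eq_neg_of_add_eq_zero_left h
  refine ⟨fun i => ((f i.val : ℕ) : ZMod n), ?_, ?_, ?_, ?_, ?_⟩
  · intro i hi
    obtain ⟨h1, h2⟩ := hf i.val (ZMod.val_lt i)
    rw [ZMod.natCast_eq_zero_iff] at hi
    have := Nat.le_of_dvd (by omega) hi
    omega
  · intro a ha
    refine two_regular _ _ hcard2
      (fun b => ((t1 b.val : ℕ) : ZMod (2 * (n - 1))))
      (fun b => ((t2 b.val : ℕ) : ZMod (2 * (n - 1)))) ?_ ?_ ?_ a (hmemV a ha)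
    · intro b hb
      obtain ⟨hb1, hb2, hb3, hb4, hb5⟩ :=
        ht b.val (hvalbound b (hVne b hb)).2 (hvalbound b (hVne b hb)).1
      show ((f ((t1 b.val : ℕ) : ZMod (2 * (n - 1))).val : ℕ) : ZMod n) = b
      rw [hcastval _ hb1, hb4, ZMod.natCast_zmod_val]
    · intro b hb
      obtain ⟨hb1, hb2, hb3, hb4, hb5⟩ :=
        ht b.val (hvalbound b (hVne b hb)).2 (hvalbound b (hVne b hb)).1
      show ((f ((t2 b.val : ℕ) : ZMod (2 * (n - 1))).val : ℕ) : ZMod n) = b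
      rw [hcastval _ hb2, hb5, ZMod.natCast_zmod_val]
    · intro b hb h
      obtain ⟨hb1, hb2, hb3, _, _⟩ :=
        ht b.val (hvalbound b (hVne b hb)).2 (hvalbound b (hVne b hb)).1
      apply hb3
      have h' := congrArg ZMod.val h
      rwa [hcastval _ hb1, hcastval _ hb2] at h'
  · intro a ha
    refine two_regular _ _ hcard2
      (fun b => ((s1 b.val : ℕ) : ZMod (2 * (n - 1))))
      (fun b => ((s2 b.val : ℕ) : ZMod (2 * (n - 1)))) ?_ ?_ ?_ a (hmemV a ha)
    · intro b hb
      obtain ⟨hb1, hb2, hb3, hb4, hb5⟩ :=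
        hs b.val (hvalbound b (hVne b hb)).2 (hvalbound b (hVne b hb)).1
      show ((f ((((s1 b.val : ℕ) : ZMod (2 * (n - 1))) - 1).val) : ℕ) : ZMod n)
          + ((f (((s1 b.val : ℕ) : ZMod (2 * (n - 1))).val) : ℕ) : ZMod n) = b
      rw [hm1, hcastval _ (Nat.mod_lt _ (by omega)), hcastval _ hb1, ← Nat.cast_add]
      rcases hb4 with h | h
      · rw [h, ZMod.natCast_zmod_val]
      · rw [h, Nat.cast_add, ZMod.natCast_self, add_zero, ZMod.natCast_zmod_val]
    · intro b hb
      obtain ⟨hb1, hb2, hb3, hb4, hb5⟩ :=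
        hs b.val (hvalbound b (hVne b hb)).2 (hvalbound b (hVne b hb)).1
      show ((f ((((s2 b.val : ℕ) : ZMod (2 * (n - 1))) - 1).val) : ℕ) : ZMod n)
          + ((f (((s2 b.val : ℕ) : ZMod (2 * (n - 1))).val) : ℕ) : ZMod n) = b
      rw [hm1, hcastval _ (Nat.mod_lt _ (by omega)), hcastval _ hb2, ← Nat.cast_add]
      rcases hb5 with h | h
      · rw [h, ZMod.natCast_zmod_val]
      · rw [h, Nat.cast_add, ZMod.natCast_self, add_zero, ZMod.natCast_zmod_val]
    · intro b hb h
      obtain ⟨hb1, hb2, hb3, _, _⟩ :=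
        hs b.val (hvalbound b (hVne b hb)).2 (hvalbound b (hVne b hb)).1
      apply hb3
      have h' := congrArg ZMod.val h
      rwa [hcastval _ hb1, hcastval _ hb2] at h'
  · show ((f ((0 : ZMod (2 * (n - 1))).val) : ℕ) : ZMod n)
        + ((f ((-2 : ZMod (2 * (n - 1))).val) : ℕ) : ZMod n) = 0
    have e2 : (-2 : ZMod (2 * (n - 1))) = ((2 * (n - 1) - 2 : ℕ) : ZMod (2 * (n - 1))) := by
      rw [hneg 2 (by omega)]; norm_num
    rw [e2, ZMod.val_zero, hcastval _ (by omega), ← Nat.cast_add, hsp1, ZMod.natCast_self]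
  · show ((f ((-3 : ZMod (2 * (n - 1))).val) : ℕ) : ZMod n)
        + ((f ((-2 : ZMod (2 * (n - 1))).val) : ℕ) : ZMod n)
        = ((f ((-1 : ZMod (2 * (n - 1))).val) : ℕ) : ZMod n)
    have e2 : (-2 : ZMod (2 * (n - 1))) = ((2 * (n - 1) - 2 : ℕ) : ZMod (2 * (n - 1))) := by
      rw [hneg 2 (by omega)]; norm_num
    have e3 : (-3 : ZMod (2 * (n - 1))) = ((2 * (n - 1) - 3 : ℕ) : ZMod (2 * (n - 1))) := by
      rw [hneg 3 (by omega)]; norm_num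
    have e1 : (-1 : ZMod (2 * (n - 1))) = ((2 * (n - 1) - 1 : ℕ) : ZMod (2 * (n - 1))) := by
      rw [hneg 1 (by omega)]; norm_num
    rw [e1, e2, e3, hcastval _ (by omega), hcastval _ (by omega), hcastval _ (by omega),
      ← Nat.cast_add, hsp2, Nat.cast_add, ZMod.natCast_self, zero_add]

/-! ### The construction for even `n ≥ 6` -/

private def dhe (n x : ℕ) : ℕ :=
  if x < n - 2 then x / 2 + 1
  else if x = n - 2 then n / 2
  else if x ≤ 2 * n - 6 then (if x % 2 = 1 then (x + 3) / 2 else x / 2)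
  else if x ≤ 2 * n - 4 then n - 1
  else n - 2

private def dte1 (n a : ℕ) : ℕ :=
  if a ≤ n / 2 then 2 * a - 2 else if a ≤ n - 2 then 2 * a - 3 else 2 * n - 5

private def dte2 (n a : ℕ) : ℕ :=
  if a < n / 2 then 2 * a - 1
  else if a ≤ n - 3 then 2 * a
  else if a = n - 2 then 2 * n - 3 else 2 * n - 4

private def dse1 (n a : ℕ) : ℕ :=
  if a = 1 then n - 1
  else if a ≤ n - 3 then a - 1
  else if a = n - 2 then n - 3 else n - 2

private def dse2 (n a : ℕ) : ℕ :=
  if a ≤ n - 4 then a + n - 1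
  else if a = n - 3 then 2 * n - 3
  else if a = n - 2 then 2 * n - 4 else 0

private lemma dhe_spec (n x : ℕ) :
    (x < n - 2 ∧ dhe n x = x / 2 + 1) ∨
    (¬ x < n - 2 ∧ x = n - 2 ∧ dhe n x = n / 2) ∨
    (¬ x < n - 2 ∧ x ≠ n - 2 ∧ x ≤ 2 * n - 6 ∧ x % 2 = 1 ∧ dhe n x = (x + 3) / 2) ∨
    (¬ x < n - 2 ∧ x ≠ n - 2 ∧ x ≤ 2 * n - 6 ∧ x % 2 ≠ 1 ∧ dhe n x = x / 2) ∨
    (¬ x < n - 2 ∧ x ≠ n - 2 ∧ ¬ x ≤ 2 * n - 6 ∧ x ≤ 2 * n - 4 ∧ dhe n x = n - 1) ∨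
    (¬ x < n - 2 ∧ x ≠ n - 2 ∧ ¬ x ≤ 2 * n - 6 ∧ ¬ x ≤ 2 * n - 4 ∧ dhe n x = n - 2) := by
  have hu : dhe n x = (if x < n - 2 then x / 2 + 1
      else if x = n - 2 then n / 2
      else if x ≤ 2 * n - 6 then (if x % 2 = 1 then (x + 3) / 2 else x / 2)
      else if x ≤ 2 * n - 4 then n - 1
      else n - 2) := rfl
  by_cases h1 : x < n - 2
  · rw [if_pos h1] at hu; exact Or.inl ⟨h1, hu⟩
  rw [if_neg h1] at hu
  by_cases h2 : x = n - 2
  · rw [if_pos h2] at hu; exact Or.inr (Or.inl ⟨h1, h2, hu⟩)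
  rw [if_neg h2] at hu
  by_cases h3 : x ≤ 2 * n - 6
  · rw [if_pos h3] at hu
    by_cases h4 : x % 2 = 1
    · rw [if_pos h4] at hu; exact Or.inr (Or.inr (Or.inl ⟨h1, h2, h3, h4, hu⟩))
    · rw [if_neg h4] at hu; exact Or.inr (Or.inr (Or.inr (Or.inl ⟨h1, h2, h3, h4, hu⟩)))
  rw [if_neg h3] at hu
  by_cases h5 : x ≤ 2 * n - 4
  · rw [if_pos h5] at hu
    exact Or.inr (Or.inr (Or.inr (Or.inr (Or.inl ⟨h1, h2, h3, h5, hu⟩))))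
  · rw [if_neg h5] at hu
    exact Or.inr (Or.inr (Or.inr (Or.inr (Or.inr ⟨h1, h2, h3, h5, hu⟩))))

private lemma dte1_spec (n a : ℕ) :
    (a ≤ n / 2 ∧ dte1 n a = 2 * a - 2) ∨
    (¬ a ≤ n / 2 ∧ a ≤ n - 2 ∧ dte1 n a = 2 * a - 3) ∨
    (¬ a ≤ n / 2 ∧ ¬ a ≤ n - 2 ∧ dte1 n a = 2 * n - 5) := by
  simp only [dte1]; split_ifs <;> omega

private lemma dte2_spec (n a : ℕ) :
    (a < n / 2 ∧ dte2 n a = 2 * a - 1) ∨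
    (¬ a < n / 2 ∧ a ≤ n - 3 ∧ dte2 n a = 2 * a) ∨
    (¬ a < n / 2 ∧ ¬ a ≤ n - 3 ∧ a = n - 2 ∧ dte2 n a = 2 * n - 3) ∨
    (¬ a < n / 2 ∧ ¬ a ≤ n - 3 ∧ a ≠ n - 2 ∧ dte2 n a = 2 * n - 4) := by
  simp only [dte2]; split_ifs <;> omega

private lemma dse1_spec (n a : ℕ) :
    (a = 1 ∧ dse1 n a = n - 1) ∨
    (a ≠ 1 ∧ a ≤ n - 3 ∧ dse1 n a = a - 1) ∨
    (a ≠ 1 ∧ ¬ a ≤ n - 3 ∧ a = n - 2 ∧ dse1 n a = n - 3) ∨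
    (a ≠ 1 ∧ ¬ a ≤ n - 3 ∧ a ≠ n - 2 ∧ dse1 n a = n - 2) := by
  simp only [dse1]; split_ifs <;> omega

private lemma dse2_spec (n a : ℕ) :
    (a ≤ n - 4 ∧ dse2 n a = a + n - 1) ∨
    (¬ a ≤ n - 4 ∧ a = n - 3 ∧ dse2 n a = 2 * n - 3) ∨
    (¬ a ≤ n - 4 ∧ a ≠ n - 3 ∧ a = n - 2 ∧ dse2 n a = 2 * n - 4) ∨
    (¬ a ≤ n - 4 ∧ a ≠ n - 3 ∧ a ≠ n - 2 ∧ dse2 n a = 0) := by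
  simp only [dse2]; split_ifs <;> omega

/-! ### The construction for odd `n ≥ 7` -/

private def dho (n x : ℕ) : ℕ :=
  if x < n - 1 then x / 2 + 1
  else if x = n - 1 then n / 2 + 2
  else if x ≤ n + 1 then n / 2 + 1
  else if x ≤ 2 * n - 6 then (if x % 2 = 1 then (x + 3) / 2 else x / 2)
  else if x ≤ 2 * n - 4 then n - 1
  else n - 2

private def dto1 (n a : ℕ) : ℕ :=
  if a ≤ n / 2 then 2 * a - 2
  else if a = n / 2 + 1 then n
  else if a = n / 2 + 2 then n - 1
  else if a ≤ n - 2 then 2 * a - 3 else 2 * n - 5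

private def dto2 (n a : ℕ) : ℕ :=
  if a ≤ n / 2 then 2 * a - 1
  else if a = n / 2 + 1 then n + 1
  else if a ≤ n - 3 then 2 * a
  else if a = n - 2 then 2 * n - 3 else 2 * n - 4

private def dso1 (n a : ℕ) : ℕ :=
  if a = 1 then n - 1
  else if a = 2 then 1
  else if a ≤ n - 3 then a - 1
  else if a = n - 2 then n - 3 else n - 2

private def dso2 (n a : ℕ) : ℕ :=
  if a = 1 then n + 1
  else if a = 2 then n
  else if a ≤ n - 4 then a + n - 1
  else if a = n - 3 then 2 * n - 3
  else if a = n - 2 then 2 * n - 4 else 0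

private lemma dho_spec (n x : ℕ) :
    (x < n - 1 ∧ dho n x = x / 2 + 1) ∨
    (¬ x < n - 1 ∧ x = n - 1 ∧ dho n x = n / 2 + 2) ∨
    (¬ x < n - 1 ∧ x ≠ n - 1 ∧ x ≤ n + 1 ∧ dho n x = n / 2 + 1) ∨
    (¬ x < n - 1 ∧ x ≠ n - 1 ∧ ¬ x ≤ n + 1 ∧ x ≤ 2 * n - 6 ∧ x % 2 = 1 ∧
      dho n x = (x + 3) / 2) ∨
    (¬ x < n - 1 ∧ x ≠ n - 1 ∧ ¬ x ≤ n + 1 ∧ x ≤ 2 * n - 6 ∧ x % 2 ≠ 1 ∧ dho n x = x / 2) ∨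
    (¬ x < n - 1 ∧ x ≠ n - 1 ∧ ¬ x ≤ n + 1 ∧ ¬ x ≤ 2 * n - 6 ∧ x ≤ 2 * n - 4 ∧
      dho n x = n - 1) ∨
    (¬ x < n - 1 ∧ x ≠ n - 1 ∧ ¬ x ≤ n + 1 ∧ ¬ x ≤ 2 * n - 6 ∧ ¬ x ≤ 2 * n - 4 ∧
      dho n x = n - 2) := by
  have hu : dho n x = (if x < n - 1 then x / 2 + 1
      else if x = n - 1 then n / 2 + 2
      else if x ≤ n + 1 then n / 2 + 1
      else if x ≤ 2 * n - 6 then (if x % 2 = 1 then (x + 3) / 2 else x / 2)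
      else if x ≤ 2 * n - 4 then n - 1
      else n - 2) := rfl
  by_cases h1 : x < n - 1
  · rw [if_pos h1] at hu; exact Or.inl ⟨h1, hu⟩
  rw [if_neg h1] at hu
  by_cases h2 : x = n - 1
  · rw [if_pos h2] at hu; exact Or.inr (Or.inl ⟨h1, h2, hu⟩)
  rw [if_neg h2] at hu
  by_cases h3 : x ≤ n + 1
  · rw [if_pos h3] at hu; exact Or.inr (Or.inr (Or.inl ⟨h1, h2, h3, hu⟩))
  rw [if_neg h3] at hu
  by_cases h4 : x ≤ 2 * n - 6
  · rw [if_pos h4] at hu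
    by_cases h5 : x % 2 = 1
    · rw [if_pos h5] at hu
      exact Or.inr (Or.inr (Or.inr (Or.inl ⟨h1, h2, h3, h4, h5, hu⟩)))
    · rw [if_neg h5] at hu
      exact Or.inr (Or.inr (Or.inr (Or.inr (Or.inl ⟨h1, h2, h3, h4, h5, hu⟩))))
  rw [if_neg h4] at hu
  by_cases h6 : x ≤ 2 * n - 4
  · rw [if_pos h6] at hu
    exact Or.inr (Or.inr (Or.inr (Or.inr (Or.inr (Or.inl ⟨h1, h2, h3, h4, h6, hu⟩)))))
  · rw [if_neg h6] at hu
    exact Or.inr (Or.inr (Or.inr (Or.inr (Or.inr (Or.inr ⟨h1, h2, h3, h4, h6, hu⟩)))))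

private lemma dto1_spec (n a : ℕ) :
    (a ≤ n / 2 ∧ dto1 n a = 2 * a - 2) ∨
    (¬ a ≤ n / 2 ∧ a = n / 2 + 1 ∧ dto1 n a = n) ∨
    (¬ a ≤ n / 2 ∧ a ≠ n / 2 + 1 ∧ a = n / 2 + 2 ∧ dto1 n a = n - 1) ∨
    (¬ a ≤ n / 2 ∧ a ≠ n / 2 + 1 ∧ a ≠ n / 2 + 2 ∧ a ≤ n - 2 ∧ dto1 n a = 2 * a - 3) ∨
    (¬ a ≤ n / 2 ∧ a ≠ n / 2 + 1 ∧ a ≠ n / 2 + 2 ∧ ¬ a ≤ n - 2 ∧ dto1 n a = 2 * n - 5) := by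
  simp only [dto1]; split_ifs <;> omega

private lemma dto2_spec (n a : ℕ) :
    (a ≤ n / 2 ∧ dto2 n a = 2 * a - 1) ∨
    (¬ a ≤ n / 2 ∧ a = n / 2 + 1 ∧ dto2 n a = n + 1) ∨
    (¬ a ≤ n / 2 ∧ a ≠ n / 2 + 1 ∧ a ≤ n - 3 ∧ dto2 n a = 2 * a) ∨
    (¬ a ≤ n / 2 ∧ a ≠ n / 2 + 1 ∧ ¬ a ≤ n - 3 ∧ a = n - 2 ∧ dto2 n a = 2 * n - 3) ∨
    (¬ a ≤ n / 2 ∧ a ≠ n / 2 + 1 ∧ ¬ a ≤ n - 3 ∧ a ≠ n - 2 ∧ dto2 n a = 2 * n - 4) := by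
  simp only [dto2]; split_ifs <;> omega

private lemma dso1_spec (n a : ℕ) :
    (a = 1 ∧ dso1 n a = n - 1) ∨
    (a ≠ 1 ∧ a = 2 ∧ dso1 n a = 1) ∨
    (a ≠ 1 ∧ a ≠ 2 ∧ a ≤ n - 3 ∧ dso1 n a = a - 1) ∨
    (a ≠ 1 ∧ a ≠ 2 ∧ ¬ a ≤ n - 3 ∧ a = n - 2 ∧ dso1 n a = n - 3) ∨
    (a ≠ 1 ∧ a ≠ 2 ∧ ¬ a ≤ n - 3 ∧ a ≠ n - 2 ∧ dso1 n a = n - 2) := by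
  simp only [dso1]; split_ifs <;> omega

private lemma dso2_spec (n a : ℕ) :
    (a = 1 ∧ dso2 n a = n + 1) ∨
    (a ≠ 1 ∧ a = 2 ∧ dso2 n a = n) ∨
    (a ≠ 1 ∧ a ≠ 2 ∧ a ≤ n - 4 ∧ dso2 n a = a + n - 1) ∨
    (a ≠ 1 ∧ a ≠ 2 ∧ ¬ a ≤ n - 4 ∧ a = n - 3 ∧ dso2 n a = 2 * n - 3) ∨
    (a ≠ 1 ∧ a ≠ 2 ∧ ¬ a ≤ n - 4 ∧ a ≠ n - 3 ∧ a = n - 2 ∧ dso2 n a = 2 * n - 4) ∨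
    (a ≠ 1 ∧ a ≠ 2 ∧ ¬ a ≤ n - 4 ∧ a ≠ n - 3 ∧ a ≠ n - 2 ∧ dso2 n a = 0) := by
  have hu : dso2 n a = (if a = 1 then n + 1
      else if a = 2 then n
      else if a ≤ n - 4 then a + n - 1
      else if a = n - 3 then 2 * n - 3
      else if a = n - 2 then 2 * n - 4 else 0) := rfl
  by_cases h1 : a = 1
  · rw [if_pos h1] at hu; exact Or.inl ⟨h1, hu⟩
  rw [if_neg h1] at hu
  by_cases h2 : a = 2
  · rw [if_pos h2] at hu; exact Or.inr (Or.inl ⟨h1, h2, hu⟩)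
  rw [if_neg h2] at hu
  by_cases h3 : a ≤ n - 4
  · rw [if_pos h3] at hu; exact Or.inr (Or.inr (Or.inl ⟨h1, h2, h3, hu⟩))
  rw [if_neg h3] at hu
  by_cases h4 : a = n - 3
  · rw [if_pos h4] at hu; exact Or.inr (Or.inr (Or.inr (Or.inl ⟨h1, h2, h3, h4, hu⟩)))
  rw [if_neg h4] at hu
  by_cases h5 : a = n - 2
  · rw [if_pos h5] at hu
    exact Or.inr (Or.inr (Or.inr (Or.inr (Or.inl ⟨h1, h2, h3, h4, h5, hu⟩))))
  · rw [if_neg h5] at hu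
    exact Or.inr (Or.inr (Or.inr (Or.inr (Or.inr ⟨h1, h2, h3, h4, h5, hu⟩))))

/-! ### The two small cases `n = 4`, `n = 5` -/

private def f4 (x : ℕ) : ℕ := [1, 1, 2, 3, 3, 2].getD x 1
private def t14 (a : ℕ) : ℕ := [0, 0, 2, 3].getD a 0
private def t24 (a : ℕ) : ℕ := [0, 1, 5, 4].getD a 0
private def s14 (a : ℕ) : ℕ := [0, 3, 1, 0].getD a 0
private def s24 (a : ℕ) : ℕ := [0, 5, 4, 2].getD a 0

private def f5 (x : ℕ) : ℕ := [1, 2, 4, 3, 1, 3, 4, 2].getD x 1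
private def t15 (a : ℕ) : ℕ := [0, 0, 1, 3, 2].getD a 0
private def t25 (a : ℕ) : ℕ := [0, 4, 7, 5, 6].getD a 0
private def s15 (a : ℕ) : ℕ := [0, 2, 3, 0, 4].getD a 0
private def s25 (a : ℕ) : ℕ := [0, 7, 6, 1, 5].getD a 0

set_option maxHeartbeats 1600000 in
private lemma even_case (n : ℕ) (h6 : 6 ≤ n) (he' : n % 2 = 0) :
    ∃ g : ZMod (2 * (n - 1)) → ZMod n,
      (∀ i, g i ≠ 0) ∧
      (∀ a : ZMod n, a ≠ 0 → Nat.card {i : ZMod (2 * (n - 1)) // g i = a} = 2) ∧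
      (∀ a : ZMod n, a ≠ 0 → Nat.card {i : ZMod (2 * (n - 1)) // g (i - 1) + g i = a} = 2) ∧
      g 0 + g (-2) = 0 ∧
      g (-3) + g (-2) = g (-1) := by
  refine aux n (by omega) (dhe n) (dte1 n) (dte2 n) (dse1 n) (dse2 n) ?_ ?_ ?_ ?_ ?_
  · intro x hx
    have r := dhe_spec n x
    omega
  · intro a h1 h2
    have r1 := dhe_spec n (dte1 n a)
    have r2 := dhe_spec n (dte2 n a)
    rcases dte1_spec n a with h | h | h <;> rcases dte2_spec n a with h' | h' | h' | h' <;> omega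
  · intro a h1 h2
    have q1 := dse1_spec n a
    have q2 := dse2_spec n a
    have e1 : 1 ≤ dse1 n a ∧ dse1 n a < 2 * (n - 1) := by omega
    rw [pred_mod _ _ e1.1 e1.2]
    refine ⟨e1.2, by omega, by omega, ?_, ?_⟩
    · have r1 := dhe_spec n (dse1 n a - 1)
      have r2 := dhe_spec n (dse1 n a)
      rcases q1 with h | h | h | h <;> omega
    · rcases eq_or_ne (dse2 n a) 0 with h0 | h0
      · rw [h0, pred_mod0 _ (by omega)]
        have r1 := dhe_spec n (2 * (n - 1) - 1)
        have r2 := dhe_spec n 0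
        omega
      · rw [pred_mod _ _ (by omega) (by omega)]
        have r1 := dhe_spec n (dse2 n a - 1)
        have r2 := dhe_spec n (dse2 n a)
        rcases q2 with h | h | h | h <;> omega
  · have r1 := dhe_spec n 0
    have r2 := dhe_spec n (2 * (n - 1) - 2)
    omega
  · have r1 := dhe_spec n (2 * (n - 1) - 3)
    have r2 := dhe_spec n (2 * (n - 1) - 2)
    have r3 := dhe_spec n (2 * (n - 1) - 1)
    omega

set_option maxHeartbeats 1600000 in
private lemma odd_case (n : ℕ) (h6 : 6 ≤ n) (ho' : n % 2 = 1) :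
    ∃ g : ZMod (2 * (n - 1)) → ZMod n,
      (∀ i, g i ≠ 0) ∧
      (∀ a : ZMod n, a ≠ 0 → Nat.card {i : ZMod (2 * (n - 1)) // g i = a} = 2) ∧
      (∀ a : ZMod n, a ≠ 0 → Nat.card {i : ZMod (2 * (n - 1)) // g (i - 1) + g i = a} = 2) ∧
      g 0 + g (-2) = 0 ∧
      g (-3) + g (-2) = g (-1) := by
  refine aux n (by omega) (dho n) (dto1 n) (dto2 n) (dso1 n) (dso2 n) ?_ ?_ ?_ ?_ ?_
  · intro x hx
    have r := dho_spec n x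
    omega
  · intro a h1 h2
    have r1 := dho_spec n (dto1 n a)
    have r2 := dho_spec n (dto2 n a)
    rcases dto1_spec n a with h | h | h | h | h <;>
      rcases dto2_spec n a with h' | h' | h' | h' | h' <;> omega
  · intro a h1 h2
    have q1 := dso1_spec n a
    have q2 := dso2_spec n a
    have e1 : 1 ≤ dso1 n a ∧ dso1 n a < 2 * (n - 1) := by omega
    rw [pred_mod _ _ e1.1 e1.2]
    refine ⟨e1.2, by omega, by omega, ?_, ?_⟩
    · have r1 := dho_spec n (dso1 n a - 1)
      have r2 := dho_spec n (dso1 n a)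
      rcases q1 with h | h | h | h | h <;> omega
    · rcases eq_or_ne (dso2 n a) 0 with h0 | h0
      · rw [h0, pred_mod0 _ (by omega)]
        have r1 := dho_spec n (2 * (n - 1) - 1)
        have r2 := dho_spec n 0
        omega
      · rw [pred_mod _ _ (by omega) (by omega)]
        have r1 := dho_spec n (dso2 n a - 1)
        have r2 := dho_spec n (dso2 n a)
        rcases q2 with h | h | h | h | h | h <;> omega
  · have r1 := dho_spec n 0
    have r2 := dho_spec n (2 * (n - 1) - 2)
    omega
  · have r1 := dho_spec n (2 * (n - 1) - 3)
    have r2 := dho_spec n (2 * (n - 1) - 2)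
    have r3 := dho_spec n (2 * (n - 1) - 1)
    omega

/-- **Special doubly harmonious sequences in `ℤ_n ∖ {0}` for `n > 3`.**
For every `n > 3` there is a sequence `g` of length `2 * (n - 1)` (indexed
cyclically by `ZMod (2 * (n - 1))`, so the last index `m` is `-1`, and the
cyclic consecutive sums are `ĝ i = g (i - 1) + g i`) of nonzero elements of
`ℤ_n` in which every nonzero element appears exactly twice among the terms and
exactly twice among the cyclic consecutive sums, and which moreover is special:
`g 0 + g (m - 1) = 0` and `g (m - 2) + g (m - 1) = g m`, i.e.
`g 0 + g (-2) = 0` and `g (-3) + g (-2) = g (-1)`. -/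
theorem exists_special_doubly_harmonious_zmod (n : ℕ) (hn : 3 < n) :
    ∃ g : ZMod (2 * (n - 1)) → ZMod n,
      (∀ i, g i ≠ 0) ∧
      (∀ a : ZMod n, a ≠ 0 → Nat.card {i : ZMod (2 * (n - 1)) // g i = a} = 2) ∧
      (∀ a : ZMod n, a ≠ 0 → Nat.card {i : ZMod (2 * (n - 1)) // g (i - 1) + g i = a} = 2) ∧
      g 0 + g (-2) = 0 ∧
      g (-3) + g (-2) = g (-1) := by
  rcases eq_or_ne n 4 with rfl | h4
  · exact aux 4 (by norm_num) f4 t14 t24 s14 s24 (by decide) (by decide) (by decide)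
      (by decide) (by decide)
  rcases eq_or_ne n 5 with rfl | h5
  · exact aux 5 (by norm_num) f5 t15 t25 s15 s25 (by decide) (by decide) (by decide)
      (by decide) (by decide)
  have h6 : 6 ≤ n := by omega
  rcases Nat.even_or_odd n with he | ho
  · exact even_case n h6 (Nat.even_iff.1 he)
  · exact odd_case n h6 (Nat.odd_iff.1 ho)
end

section
/- For every positive integer m, the set ℤ_{2^m} ∖ {2^{m-1}} is harmonious; that is, there exists a sequence listing each element of ℤ_{2^m} except the unique involution 2^{m-1} exactly once, whose cyclic consecutive sums also list each element of ℤ_{2^m} ∖ {2^{m-1}} exactly once. -/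
private def Vf (c k : ℕ) : ℕ :=
  if k % 2 = 1 then (k + 1) / 2 else if k = 2 * c - 2 then 0 else k / 2 + c + 1

private lemma Vf_lt {c k : ℕ} (hc : 1 ≤ c) (hk : k < 2 * c - 1) : Vf c k < 2 * c := by
  simp only [Vf]; split_ifs <;> omega

private lemma Vf_ne {c k : ℕ} (hc : 1 ≤ c) (hk : k < 2 * c - 1) : Vf c k ≠ c := by
  simp only [Vf]; split_ifs <;> omega

private lemma Vf_inj {c a b : ℕ} (hc : 1 ≤ c) (ha : a < 2 * c - 1) (hb : b < 2 * c - 1)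
    (h : Vf c a = Vf c b) : a = b := by
  simp only [Vf] at h; split_ifs at h <;> omega

private lemma Vf_surj {c v : ℕ} (hc : 1 ≤ c) (hv : v < 2 * c) (hvc : v ≠ c) :
    ∃ k, k < 2 * c - 1 ∧ Vf c k = v := by
  refine ⟨if v = 0 then 2 * c - 2 else if v < c then 2 * v - 1 else 2 * (v - c - 1), ?_⟩
  simp only [Vf]; split_ifs <;> omega

private lemma Vf_add {c a b d : ℕ} (hc : 1 ≤ c) (hb : b < 2 * c - 1)
    (ha : a = if b = 0 then 2 * c - 2 else b - 1)
    (hd : d = if 2 * b < 2 * c - 1 then 2 * b else 2 * b - (2 * c - 1)) :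
    Vf c a + Vf c b = Vf c d ∨ Vf c a + Vf c b = Vf c d + 2 * c := by
  subst ha hd
  simp only [Vf]; split_ifs <;> omega

/-- **`ℤ_{2^m} ∖ {2^{m-1}}` is harmonious.**
For every positive integer `m` there is a sequence `g` of length `2^m - 1`
(indexed cyclically, with cyclic consecutive sums `ĝ i = g (i - 1) + g i`)
listing each element of `ℤ_{2^m}` other than the involution `2^(m-1)` exactly
once, whose cyclic consecutive sums also list each element of
`ℤ_{2^m} ∖ {2^(m-1)}` exactly once. -/
theorem zmod_pow_two_flat_harmonious (m : ℕ) (hm : 0 < m) :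
    ∃ g : ZMod (2 ^ m - 1) → ZMod (2 ^ m),
      Function.Injective g ∧
      Set.range g = {x : ZMod (2 ^ m) | x ≠ ((2 ^ (m - 1) : ℕ) : ZMod (2 ^ m))} ∧
      Function.Injective (fun i : ZMod (2 ^ m - 1) => g (i - 1) + g i) ∧
      Set.range (fun i : ZMod (2 ^ m - 1) => g (i - 1) + g i)
        = {x : ZMod (2 ^ m) | x ≠ ((2 ^ (m - 1) : ℕ) : ZMod (2 ^ m))} := by
  set c : ℕ := 2 ^ (m - 1) with hcdef
  have hc : 1 ≤ c := Nat.one_le_two_pow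
  have hn : 2 ^ m = 2 * c := by
    rw [hcdef, ← pow_succ']
    congr 1
    omega
  set N : ℕ := 2 ^ m - 1 with hNdef
  have hN : N = 2 * c - 1 := by omega
  haveI : NeZero N := ⟨by omega⟩
  haveI : NeZero (2 ^ m) := ⟨by positivity⟩
  -- the sequence
  set g : ZMod N → ZMod (2 ^ m) := fun i => ((Vf c i.val : ℕ) : ZMod (2 ^ m)) with hgdef
  have hvlt : ∀ i : ZMod N, i.val < 2 * c - 1 := fun i => by
    have := ZMod.val_lt i; omega
  have hgval : ∀ i : ZMod N, (g i).val = Vf c i.val := by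
    intro i
    rw [hgdef]
    exact ZMod.val_cast_of_lt (by rw [hn]; exact Vf_lt hc (hvlt i))
  -- injectivity of g
  have hginj : Function.Injective g := by
    intro x y h
    have h2 : Vf c x.val = Vf c y.val := by rw [← hgval, ← hgval, h]
    have := Vf_inj hc (hvlt x) (hvlt y) h2
    exact ZMod.val_injective N this
  -- the excluded element
  have hcval : (((2 ^ (m - 1) : ℕ) : ZMod (2 ^ m))).val = c := by
    rw [← hcdef]
    exact ZMod.val_cast_of_lt (by omega)
  -- range of g
  have hgrange : Set.range g = {x : ZMod (2 ^ m) | x ≠ ((2 ^ (m - 1) : ℕ) : ZMod (2 ^ m))} := by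
    ext x
    simp only [Set.mem_range, Set.mem_setOf_eq]
    constructor
    · rintro ⟨i, rfl⟩ h
      have : (g i).val = c := by rw [h, hcval]
      rw [hgval] at this
      exact Vf_ne hc (hvlt i) this
    · intro hx
      have hxval : x.val ≠ c := fun h => hx (ZMod.val_injective _ (by rw [h, hcval]))
      have hxlt : x.val < 2 * c := by have := ZMod.val_lt x; omega
      obtain ⟨k, hk, hkv⟩ := Vf_surj hc hxlt hxval
      refine ⟨(k : ZMod N), ?_⟩
      rw [hgdef]
      simp only
      rw [ZMod.val_cast_of_lt (by omega), hkv, ZMod.natCast_val, ZMod.cast_id]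
  -- functional equation : g (i-1) + g i = g (2*i)
  have hfe : ∀ i : ZMod N, g (i - 1) + g i = g (2 * i) := by
    intro i
    have hb := hvlt i
    -- value of (i - 1)
    have hsub : (i - 1).val = if i.val = 0 then 2 * c - 2 else i.val - 1 := by
      have hm1 : (1 : ZMod N) = ((1 : ℕ) : ZMod N) := by norm_num
      have hNm1 : ((N - 1 : ℕ) : ZMod N) = -1 := by
        have h1 : (1 : ℕ) ≤ N := by omega
        push_cast [Nat.cast_sub h1]
        rw [ZMod.natCast_self]
        ring
      have : i - 1 = i + ((N - 1 : ℕ) : ZMod N) := by rw [hNm1]; ring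
      rw [this, ZMod.val_add, ZMod.val_cast_of_lt (by omega)]
      by_cases h0 : i.val = 0
      · rw [h0]
        simp only [h0, if_true, zero_add]
        rw [Nat.mod_eq_of_lt (by omega)]
        omega
      · simp only [h0, if_false]
        have : i.val + (N - 1) = (i.val - 1) + N := by omega
        rw [this, Nat.add_mod_right, Nat.mod_eq_of_lt (by omega)]
    -- value of (2 * i)
    have hdbl : (2 * i).val = if 2 * i.val < 2 * c - 1 then 2 * i.val
        else 2 * i.val - (2 * c - 1) := by
      have h2i : (2 : ZMod N) * i = i + i := by ring
      rw [h2i, ZMod.val_add]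
      by_cases hlt : 2 * i.val < 2 * c - 1
      · simp only [hlt, if_true]
        rw [Nat.mod_eq_of_lt (by omega)]
        omega
      · simp only [hlt, if_false]
        have : i.val + i.val = (2 * i.val - (2 * c - 1)) + N := by omega
        rw [this, Nat.add_mod_right, Nat.mod_eq_of_lt (by omega)]
    have key := Vf_add hc hb hsub hdbl
    rw [hgdef]
    simp only
    rcases key with h | h
    · rw [← Nat.cast_add, h]
    · rw [← Nat.cast_add, h, Nat.cast_add]
      have h0 : ((2 * c : ℕ) : ZMod (2 ^ m)) = 0 := by rw [← hn]; exact ZMod.natCast_self _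
      rw [h0, add_zero]
  -- doubling is a bijection on ZMod N
  have hodd : Odd N := ⟨c - 1, by omega⟩
  have hu : IsUnit (2 : ZMod N) := by
    have : ((2 : ℕ) : ZMod N) = (2 : ZMod N) := by push_cast; ring
    rw [← this, ZMod.isUnit_iff_coprime]
    exact Nat.coprime_two_left.mpr hodd
  have hdinj : Function.Injective (fun i : ZMod N => 2 * i) := fun x y h =>
    hu.mul_left_cancel h
  have hdsurj : Function.Surjective (fun i : ZMod N => 2 * i) :=
    (Finite.injective_iff_surjective).mp hdinj
  refine ⟨g, hginj, hgrange, ?_, ?_⟩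
  · have : (fun i : ZMod N => g (i - 1) + g i) = g ∘ (fun i : ZMod N => 2 * i) := by
      funext i; exact hfe i
    rw [this]
    exact hginj.comp hdinj
  · have : (fun i : ZMod N => g (i - 1) + g i) = g ∘ (fun i : ZMod N => 2 * i) := by
      funext i; exact hfe i
    rw [this, Set.range_comp, hdsurj.range_eq, Set.image_univ, hgrange]
end

section
/- Let G be a finite abelian group with a unique element ι of order 2. Then G ∖ {ι} is harmonious; that is, there exists a sequence listing each element of G except ι exactly once whose cyclic consecutive sums also list each element of G ∖ {ι} exactly once. -/
namespace FH

/-- A harmonious sequence of length `n` in an additive group `H`. -/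
def HSeqN (n : ℕ) (H : Type*) [AddCommGroup H] : Prop :=
  ∃ c : ZMod n → H, Function.Bijective c ∧
    Function.Bijective (fun j : ZMod n => c (j - 1) + c j)

variable {H K : Type*} [AddCommGroup H] [AddCommGroup K]

lemma two_nsmul_injective [Fintype H] (hodd : Odd (Fintype.card H)) :
    Function.Injective (fun x : H => x + x) := by
  intro x y hxy
  simp only at hxy
  have h2 : (x - y) + (x - y) = 0 := by
    have : x + x - (y + y) = 0 := by rw [hxy]; abel
    rw [← this]; abel
  have hd : addOrderOf (x - y) ∣ 2 := by
    apply addOrderOf_dvd_of_nsmul_eq_zero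
    rw [two_nsmul]; exact h2
  have hd' : addOrderOf (x - y) ∣ Fintype.card H := addOrderOf_dvd_card
  have hdd : addOrderOf (x - y) ∣ Nat.gcd 2 (Fintype.card H) := Nat.dvd_gcd hd hd'
  have hg : Nat.gcd 2 (Fintype.card H) = 1 := hodd.coprime_two_left
  rw [hg, Nat.dvd_one, AddMonoid.addOrderOf_eq_one_iff, sub_eq_zero] at hdd
  exact hdd

lemma HSeqN.transfer {n : ℕ} (e : H ≃+ K) (h : HSeqN n H) : HSeqN n K := by
  obtain ⟨c, hc, hs⟩ := h
  refine ⟨fun j => e (c j), e.bijective.comp hc, ?_⟩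
  have : (fun j : ZMod n => e (c (j - 1)) + e (c j))
      = fun j => e (c (j - 1) + c j) := by
    funext j; rw [map_add]
  rw [this]
  exact e.bijective.comp hs

lemma hseqN_one (H : Type*) [AddCommGroup H] [Fintype H]
    (h1 : Fintype.card H = 1) : HSeqN 1 H := by
  haveI : Subsingleton H := Fintype.card_le_one_iff_subsingleton.mp h1.le
  refine ⟨fun _ => 0, ⟨fun a b _ => Subsingleton.elim a b,
    fun y => ⟨0, Subsingleton.elim _ _⟩⟩, ⟨fun a b _ => Subsingleton.elim a b,
    fun y => ⟨0, Subsingleton.elim _ _⟩⟩⟩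

lemma val_sub_one {m : ℕ} [NeZero m] (i : ZMod m) :
    (i - 1).val = (i.val + (m - 1)) % m := by
  have h1 : (1 : ℕ) ≤ m := Nat.one_le_iff_ne_zero.mpr (NeZero.ne m)
  have : i - 1 = ((i.val + (m - 1) : ℕ) : ZMod m) := by
    push_cast
    rw [Nat.cast_sub h1, ZMod.natCast_self, ZMod.natCast_val, ZMod.cast_id]
    push_cast
    ring
  rw [this, ZMod.val_natCast]

lemma val_sub_one_of_ne {m : ℕ} [NeZero m] (i : ZMod m) (h : i.val ≠ 0) :
    (i - 1).val = i.val - 1 := by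
  have hv : i.val < m := ZMod.val_lt i
  have h2 : i.val + (m - 1) = (i.val - 1) + m := by omega
  rw [val_sub_one, h2, Nat.add_mod_right, Nat.mod_eq_of_lt (by omega)]

lemma val_sub_one_of_eq {m : ℕ} [NeZero m] (i : ZMod m) (h : i.val = 0) :
    (i - 1).val = m - 1 := by
  have h1 : (1 : ℕ) ≤ m := Nat.one_le_iff_ne_zero.mpr (NeZero.ne m)
  rw [val_sub_one, h, Nat.zero_add, Nat.mod_eq_of_lt (by omega)]

lemma natCast_sub_one {k : ℕ} (u : ℕ) (h : 1 ≤ u) :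
    ((u - 1 : ℕ) : ZMod k) = (u : ZMod k) - 1 := by
  rw [Nat.cast_sub h, Nat.cast_one]

lemma natCast_self_sub_one {k : ℕ} (h : 1 ≤ k) : ((k - 1 : ℕ) : ZMod k) = -1 := by
  rw [natCast_sub_one k h, ZMod.natCast_self, zero_sub]

lemma HSeqN.prod {k n : ℕ} [Fintype K] (hK : Fintype.card K = k)
    (h : HSeqN k K) (hn : Odd n) (hk : 0 < k) :
    HSeqN (k * n) (K × ZMod n) := by
  have hn1 : 0 < n := hn.pos
  haveI : NeZero n := ⟨hn1.ne'⟩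
  haveI : NeZero (k * n) := ⟨(Nat.mul_pos hk hn1).ne'⟩
  obtain ⟨c, hc, hs⟩ := h
  have hvlt : ∀ i : ZMod (k * n), i.val < k * n := fun i => ZMod.val_lt i
  have hmodlt : ∀ i : ZMod (k * n), i.val % k < k := fun i => Nat.mod_lt _ hk
  have hdivlt : ∀ i : ZMod (k * n), i.val / k < n := by
    intro i
    have h1 := hvlt i
    have h2 : k * n = n * k := Nat.mul_comm k n
    exact Nat.div_lt_of_lt_mul (by omega)
  have hrecon : ∀ i i' : ZMod (k * n),
      ((i.val % k : ℕ) : ZMod k) = ((i'.val % k : ℕ) : ZMod k) →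
      ((i.val / k : ℕ) : ZMod n) = ((i'.val / k : ℕ) : ZMod n) → i = i' := by
    intro i i' h1 h2
    have e1 : i.val % k = i'.val % k := by
      have := congrArg ZMod.val h1
      rwa [ZMod.val_natCast_of_lt (hmodlt i), ZMod.val_natCast_of_lt (hmodlt i')] at this
    have e2 : i.val / k = i'.val / k := by
      have := congrArg ZMod.val h2
      rwa [ZMod.val_natCast_of_lt (hdivlt i), ZMod.val_natCast_of_lt (hdivlt i')] at this
    have : i.val = i'.val := by
      have d1 := Nat.div_add_mod i.val k
      have d2 := Nat.div_add_mod i'.val k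
      rw [e1, e2] at d1
      omega
    exact ZMod.val_injective _ this
  -- predecessor values, ℕ level
  have hpm : ∀ i : ZMod (k * n), (i - 1).val % k
      = (if i.val % k = 0 then k else i.val % k) - 1 := by
    intro i
    rcases Nat.eq_zero_or_pos i.val with hiv | hiv
    · have hv : (i - 1).val = k * n - 1 := val_sub_one_of_eq i hiv
      have hsplit : k * n - 1 = k * (n - 1) + (k - 1) := by
        obtain ⟨n', rfl⟩ : ∃ n', n = n' + 1 := ⟨n - 1, by omega⟩
        rw [Nat.add_sub_cancel, Nat.mul_succ]; omega
      rw [hv, hsplit, Nat.mul_add_mod, Nat.mod_eq_of_lt (show k - 1 < k by omega), hiv]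
      simp
    · have hv : (i - 1).val = i.val - 1 := val_sub_one_of_ne i hiv.ne'
      have d1 := Nat.div_add_mod i.val k
      rcases Nat.eq_zero_or_pos (i.val % k) with hm0 | hm0
      · have hq1 : 1 ≤ i.val / k := by
          rcases Nat.eq_zero_or_pos (i.val / k) with h0 | h0
          · rw [h0, Nat.mul_zero] at d1; omega
          · exact h0
        have hsplit : i.val - 1 = k * (i.val / k - 1) + (k - 1) := by
          obtain ⟨d, hd⟩ : ∃ d, i.val / k = d + 1 := ⟨i.val / k - 1, by omega⟩
          rw [hd, Nat.add_sub_cancel]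
          rw [hd, Nat.mul_succ] at d1
          omega
        rw [hv, hsplit, Nat.mul_add_mod, Nat.mod_eq_of_lt (show k - 1 < k by omega)]
        simp [hm0]
      · have hsplit : i.val - 1 = k * (i.val / k) + (i.val % k - 1) := by omega
        rw [hv, hsplit, Nat.mul_add_mod,
          Nat.mod_eq_of_lt (show i.val % k - 1 < k from by have := hmodlt i; omega)]
        simp [hm0.ne']
  have hpd : ∀ i : ZMod (k * n), (i - 1).val / k
      = (if i.val % k = 0 then (if i.val = 0 then n else i.val / k) - 1
         else i.val / k) := by
    intro i
    rcases Nat.eq_zero_or_pos i.val with hiv | hiv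
    · have hv : (i - 1).val = k * n - 1 := val_sub_one_of_eq i hiv
      have hsplit : k * n - 1 = k * (n - 1) + (k - 1) := by
        obtain ⟨n', rfl⟩ : ∃ n', n = n' + 1 := ⟨n - 1, by omega⟩
        rw [Nat.add_sub_cancel, Nat.mul_succ]; omega
      rw [hv, hsplit, Nat.mul_add_div hk,
        Nat.div_eq_of_lt (show k - 1 < k by omega), hiv]
      simp
    · have hv : (i - 1).val = i.val - 1 := val_sub_one_of_ne i hiv.ne'
      have d1 := Nat.div_add_mod i.val k
      rcases Nat.eq_zero_or_pos (i.val % k) with hm0 | hm0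
      · have hq1 : 1 ≤ i.val / k := by
          rcases Nat.eq_zero_or_pos (i.val / k) with h0 | h0
          · rw [h0, Nat.mul_zero] at d1; omega
          · exact h0
        have hsplit : i.val - 1 = k * (i.val / k - 1) + (k - 1) := by
          obtain ⟨d, hd⟩ : ∃ d, i.val / k = d + 1 := ⟨i.val / k - 1, by omega⟩
          rw [hd, Nat.add_sub_cancel]
          rw [hd, Nat.mul_succ] at d1
          omega
        rw [hv, hsplit, Nat.mul_add_div hk,
          Nat.div_eq_of_lt (show k - 1 < k by omega)]
        simp [hm0, hiv.ne']
      · have hsplit : i.val - 1 = k * (i.val / k) + (i.val % k - 1) := by omega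
        rw [hv, hsplit, Nat.mul_add_div hk,
          Nat.div_eq_of_lt (show i.val % k - 1 < k from by have := hmodlt i; omega)]
        simp [hm0.ne']
  -- predecessor, cast level
  have hcm : ∀ i : ZMod (k * n),
      (((i - 1).val % k : ℕ) : ZMod k) = ((i.val % k : ℕ) : ZMod k) - 1 := by
    intro i
    rw [hpm i]
    by_cases h0 : i.val % k = 0
    · rw [if_pos h0, natCast_self_sub_one hk, h0]; simp
    · rw [if_neg h0, natCast_sub_one _ (by omega)]
  have hcd : ∀ i : ZMod (k * n),
      (((i - 1).val / k : ℕ) : ZMod n) = ((i.val / k : ℕ) : ZMod n)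
        - (if i.val % k = 0 then 1 else 0) := by
    intro i
    rw [hpd i]
    by_cases h0 : i.val % k = 0
    · rw [if_pos h0, if_pos h0]
      by_cases h1 : i.val = 0
      · rw [if_pos h1, natCast_sub_one _ (by omega), ZMod.natCast_self, h1]
        simp
      · rw [if_neg h1]
        have hq1 : 1 ≤ i.val / k := by
          have d1 := Nat.div_add_mod i.val k
          rcases Nat.eq_zero_or_pos (i.val / k) with hq | hq
          · rw [hq, Nat.mul_zero] at d1; omega
          · exact hq
        rw [natCast_sub_one _ hq1]
    · rw [if_neg h0, if_neg h0, sub_zero]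
  refine ⟨fun i => (c ((i.val % k : ℕ) : ZMod k), ((i.val / k : ℕ) : ZMod n)), ?_, ?_⟩
  · rw [Fintype.bijective_iff_injective_and_card]
    constructor
    · intro i i' hii
      obtain ⟨h1, h2⟩ := Prod.ext_iff.mp hii
      exact hrecon i i' (hc.injective h1) h2
    · simp [ZMod.card, Fintype.card_prod, hK]
  · rw [Fintype.bijective_iff_injective_and_card]
    constructor
    · intro i i' hii
      simp only [Prod.mk_add_mk, Prod.mk.injEq] at hii
      obtain ⟨h1, h2⟩ := hii
      rw [hcm i, hcm i'] at h1
      have hA : ((i.val % k : ℕ) : ZMod k) = ((i'.val % k : ℕ) : ZMod k) :=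
        hs.injective (by simpa using h1)
      have hAv : i.val % k = i'.val % k := by
        have := congrArg ZMod.val hA
        rwa [ZMod.val_natCast_of_lt (hmodlt i), ZMod.val_natCast_of_lt (hmodlt i')] at this
      rw [hcd i, hcd i', hAv] at h2
      have h3 : ((i.val / k : ℕ) : ZMod n) + ((i.val / k : ℕ) : ZMod n)
          = ((i'.val / k : ℕ) : ZMod n) + ((i'.val / k : ℕ) : ZMod n) := by
        by_cases h0 : i'.val % k = 0
        · rw [if_pos h0] at h2; linear_combination h2
        · rw [if_neg h0] at h2; linear_combination h2
      have hB := two_nsmul_injective (H := ZMod n) (by rwa [ZMod.card]) h3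
      exact hrecon i i' hA hB
    · simp [ZMod.card, Fintype.card_prod, hK]

def piSplitAddEquiv {ι : Type*} [DecidableEq ι] (i₀ : ι) (M : ι → Type*)
    [∀ i, AddCommMonoid (M i)] :
    (∀ i, M i) ≃+ M i₀ × (∀ j : {j // j ≠ i₀}, M j) :=
  { Equiv.piSplitAt i₀ M with map_add' := fun _ _ => rfl }

lemma hseq_odd_aux : ∀ (N : ℕ) (H : Type) [AddCommGroup H] [Fintype H],
    Fintype.card H ≤ N → Odd (Fintype.card H) → HSeqN (Fintype.card H) H := by
  intro N
  induction N with
  | zero =>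
    intro H _ _ hle _
    have := Fintype.card_pos (α := H)
    omega
  | succ N IH =>
    intro H _ _ hle hodd
    by_cases h1 : Fintype.card H = 1
    · rw [h1]; exact hseqN_one H h1
    · classical
      obtain ⟨ι, fι, nf, hnf, ⟨e⟩⟩ := AddCommGroup.equiv_directSum_zmod_of_finite' H
      haveI := fι
      have e' : H ≃+ ∀ i, ZMod (nf i) := e.trans (DirectSum.addEquivProd _)
      haveI : Nonempty ι := by
        by_contra hempty
        haveI : IsEmpty ι := not_nonempty_iff.mp hempty
        have : Fintype.card H = 1 := by
          rw [Fintype.card_congr e'.toEquiv]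
          simp
        exact h1 this
      set i₀ := Classical.arbitrary ι with hi₀
      set n := nf i₀ with hn
      have hn2 : 2 ≤ n := hnf i₀
      haveI : NeZero n := ⟨by omega⟩
      set K := ∀ j : {j // j ≠ i₀}, ZMod (nf j) with hKdef
      haveI : ∀ j : {j // j ≠ i₀}, NeZero (nf j.val) := fun j => ⟨by have := hnf j.val; omega⟩
      haveI : Fintype K := by unfold K; infer_instance
      have e2 : H ≃+ K × ZMod n :=
        e'.trans ((piSplitAddEquiv i₀ _).trans AddEquiv.prodComm)
      have hcard : Fintype.card H = Fintype.card K * n := by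
        rw [Fintype.card_congr e2.toEquiv, Fintype.card_prod, ZMod.card]
      have hoddKn : Odd (Fintype.card K) ∧ Odd n := by
        rw [hcard, Nat.odd_mul] at hodd
        exact hodd
      have hKpos : 0 < Fintype.card K := Fintype.card_pos
      have hKle : Fintype.card K ≤ N := by
        have h2 : Fintype.card K * 2 ≤ Fintype.card K * n :=
          Nat.mul_le_mul_left _ hn2
        omega
      have res := (IH K hKle hoddKn.1).prod rfl hoddKn.2 hKpos
      have final : HSeqN (Fintype.card K * n) H := res.transfer e2.symm
      rw [hcard]
      exact final

lemma hseq_odd (H : Type) [AddCommGroup H] [Fintype H]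
    (h : Odd (Fintype.card H)) : HSeqN (Fintype.card H) H :=
  hseq_odd_aux (Fintype.card H) H le_rfl h

/-- base pattern for the 2-part -/
def xv (q2 r : ℕ) : ℕ := r / 2 + r % 2 * q2
/-- block shifts -/
def tv (q2 j : ℕ) : ℕ := (1 - j % 2) * q2

section nat
variable {q2 : ℕ} (hq2 : 1 ≤ q2)

lemma xv_lt {r : ℕ} (hr : r < 2 * q2) : xv q2 r < 2 * q2 := by
  rcases Nat.mod_two_eq_zero_or_one r with h | h <;> simp only [xv, h] <;> omega

lemma xv_inj {r r' : ℕ} (hr : r < 2 * q2) (hr' : r' < 2 * q2)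
    (h : xv q2 r = xv q2 r') : r = r' := by
  rcases Nat.mod_two_eq_zero_or_one r with h1 | h1 <;>
    rcases Nat.mod_two_eq_zero_or_one r' with h2 | h2 <;>
    simp only [xv, h1, h2] at h <;> omega

lemma xv_sum {r : ℕ} (hr : 1 ≤ r) :
    xv q2 (r - 1) + xv q2 r = r + q2 - 1 := by
  rcases Nat.mod_two_eq_zero_or_one r with h1 | h1 <;>
    (have h2 : (r - 1) % 2 = 1 - r % 2 := by omega) <;>
    simp only [xv, h1, h2] <;> omega

lemma xv_zero : xv q2 0 = 0 := by simp only [xv]; omega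
lemma xv_one : xv q2 1 = q2 := by simp only [xv]; omega
lemma xv_last (hq2 : 1 ≤ q2) : xv q2 (2 * q2 - 1) = 2 * q2 - 1 := by
  have h1 : (2 * q2 - 1) % 2 = 1 := by omega
  simp only [xv, h1]; omega

lemma tv_le (j : ℕ) : tv q2 j ≤ q2 := by
  rcases Nat.mod_two_eq_zero_or_one j with h | h <;> simp only [tv, h] <;> omega

lemma tv_zero : tv q2 0 = q2 := by simp [tv]

lemma tv_sum {j : ℕ} (hj : 1 ≤ j) : tv q2 (j - 1) + tv q2 j = q2 := by
  rcases Nat.mod_two_eq_zero_or_one j with h1 | h1 <;>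
    (have h2 : (j - 1) % 2 = 1 - j % 2 := by omega) <;>
    simp only [tv, h1, h2] <;> omega

lemma tv_even {j : ℕ} (hj : j % 2 = 0) : tv q2 j = q2 := by simp [tv, hj]

lemma tv_double (j : ℕ) : 2 * tv q2 j = 0 ∨ 2 * tv q2 j = 2 * q2 * 1 := by
  rcases Nat.mod_two_eq_zero_or_one j with h | h <;> simp only [tv, h] <;> omega

end nat

lemma divmod {k : ℕ} (b r : ℕ) (hk : 0 < k) (hr : r < k) :
    (k * b + r) / k = b ∧ (k * b + r) % k = r :=
  ⟨by rw [Nat.mul_add_div hk, Nat.div_eq_of_lt hr, Nat.add_zero],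
   by rw [Nat.mul_add_mod, Nat.mod_eq_of_lt hr]⟩

lemma cast_cancel_eq {q a b t : ℕ} (hab : ((a + t : ℕ) : ZMod q) = ((b + t : ℕ) : ZMod q)) :
    (a : ZMod q) = b := by
  have h := (ZMod.natCast_eq_natCast_iff _ _ _).mp hab
  exact (ZMod.natCast_eq_natCast_iff _ _ _).mpr (Nat.ModEq.add_right_cancel' t h)

lemma cast_eq_of_lt_inj {q a b : ℕ} (ha : a < q) (hb : b < q)
    (h : (a : ZMod q) = b) : a = b := by
  have h2 := congrArg ZMod.val h
  rwa [ZMod.val_natCast_of_lt ha, ZMod.val_natCast_of_lt hb] at h2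

lemma cast_drop {q2 a b k : ℕ} (hab : a = b + 2 * q2 * k) :
    ((a : ℕ) : ZMod (2 * q2)) = b := by
  subst hab
  rw [Nat.cast_add, Nat.cast_mul, ZMod.natCast_self, zero_mul, add_zero]



lemma main_construct (q2 h : ℕ) (hq2 : 1 ≤ q2) (hh : Odd h)
    (H : Type*) [AddCommGroup H] [Fintype H] (hcard : Fintype.card H = h)
    (hseq : HSeqN h H) :
    ∃ g : ZMod (2 * q2 * h - 1) → (ZMod (2 * q2) × H),
      Function.Injective g ∧
      Set.range g = {x | x ≠ ((q2 : ZMod (2 * q2)), (0 : H))} ∧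
      Function.Injective (fun i => g (i - 1) + g i) ∧
      Set.range (fun i => g (i - 1) + g i) = {x | x ≠ ((q2 : ZMod (2 * q2)), (0 : H))} := by
  have hh1 : 1 ≤ h := hh.pos
  have hq : 2 ≤ 2 * q2 := by omega
  have hm1 : 1 ≤ 2 * q2 * h := Nat.one_le_iff_ne_zero.mpr (Nat.mul_ne_zero (by omega) (by omega))
  set m : ℕ := 2 * q2 * h - 1 with hm
  have hm2 : m + 1 = 2 * q2 * h := by omega
  haveI : NeZero m := ⟨by
    simp only [hm]
    have : 2 * q2 * 1 ≤ 2 * q2 * h := Nat.mul_le_mul_left _ hh1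
    omega⟩
  haveI : NeZero h := ⟨by omega⟩
  haveI : NeZero (2 * q2) := ⟨by omega⟩
  -- normalize the harmonious sequence so that c 0 = 0
  obtain ⟨c₀, hc₀, hs₀⟩ := hseq
  set c : ZMod h → H := fun j => c₀ j - c₀ 0 with hcdef
  have hc : Function.Bijective c := by
    constructor
    · intro a b hab
      simp only [hcdef, sub_left_inj] at hab
      exact hc₀.injective hab
    · intro y
      obtain ⟨a, ha⟩ := hc₀.surjective (y + c₀ 0)
      exact ⟨a, by simp [hcdef, ha]⟩
  have hcs : Function.Bijective (fun j : ZMod h => c (j - 1) + c j) := by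
    have heq : (fun j : ZMod h => c (j - 1) + c j)
        = fun j => (c₀ (j - 1) + c₀ j) - (c₀ 0 + c₀ 0) := by
      funext j; simp only [hcdef]; abel
    rw [heq]
    constructor
    · intro a b hab
      simp only [sub_left_inj] at hab
      exact hs₀.injective hab
    · intro y
      obtain ⟨a, ha⟩ := hs₀.surjective (y + (c₀ 0 + c₀ 0))
      exact ⟨a, by simp only at ha ⊢; rw [ha]; abel⟩
  have hc00 : c 0 = 0 := by simp [hcdef]
  have hoddH : Odd (Fintype.card H) := by rw [hcard]; exact hh
  have hczero : ∀ j : ZMod h, c j = 0 → j = 0 := by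
    intro j hj
    exact hc.injective (by rw [hj, hc00])
  -- the sequence
  set gf : ZMod m → ZMod (2 * q2) × H := fun i =>
    ( ((xv q2 ((i.val + 1) % (2 * q2)) + tv q2 ((i.val + 1) / (2 * q2)) : ℕ) : ZMod (2 * q2)),
      c (((i.val + 1) / (2 * q2) : ℕ) : ZMod h) ) with hgf
  -- basic index facts
  have hIb : ∀ i : ZMod m, 1 ≤ i.val + 1 ∧ i.val + 1 ≤ m := by
    intro i
    have := ZMod.val_lt i
    omega
  have hjlt : ∀ i : ZMod m, (i.val + 1) / (2 * q2) < h := by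
    intro i
    have h1 := (hIb i).2
    apply Nat.div_lt_of_lt_mul
    have h3 : 2 * q2 * h = h * (2 * q2) := Nat.mul_comm _ _
    omega
  have hrlt : ∀ a : ℕ, a % (2 * q2) < 2 * q2 := fun a => Nat.mod_lt _ (by omega)
  -- injectivity of gf
  have hginj : Function.Injective gf := by
    intro i i' heq
    simp only [hgf, Prod.mk.injEq] at heq
    obtain ⟨h1, h2⟩ := heq
    have hj : (i.val + 1) / (2 * q2) = (i'.val + 1) / (2 * q2) := by
      have := hc.injective h2
      exact cast_eq_of_lt_inj (hjlt i) (hjlt i') this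
    rw [hj] at h1
    have hx : xv q2 ((i.val + 1) % (2 * q2)) = xv q2 ((i'.val + 1) % (2 * q2)) := by
      have h3 := cast_cancel_eq h1
      exact cast_eq_of_lt_inj (xv_lt (hrlt _)) (xv_lt (hrlt _)) h3
    have hr : (i.val + 1) % (2 * q2) = (i'.val + 1) % (2 * q2) :=
      xv_inj (hrlt _) (hrlt _) hx
    have d1 := Nat.div_add_mod (i.val + 1) (2 * q2)
    have d2 := Nat.div_add_mod (i'.val + 1) (2 * q2)
    rw [hj, hr] at d1
    exact ZMod.val_injective _ (by omega)
  -- gf never takes the forbidden value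
  have hgne : ∀ i : ZMod m, gf i ≠ ((q2 : ZMod (2 * q2)), (0 : H)) := by
    intro i hbad
    simp only [hgf, Prod.mk.injEq] at hbad
    obtain ⟨h1, h2⟩ := hbad
    have hj0 : (i.val + 1) / (2 * q2) = 0 := by
      have := hczero _ h2
      have h3 : (((i.val + 1) / (2 * q2) : ℕ) : ZMod h) = ((0 : ℕ) : ZMod h) := by
        simpa using this
      exact cast_eq_of_lt_inj (hjlt i) (by omega) h3
    have hr : (i.val + 1) % (2 * q2) = i.val + 1 := by
      have d1 := Nat.div_add_mod (i.val + 1) (2 * q2)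
      rw [hj0] at d1
      omega
    rw [hj0, tv_zero] at h1
    have h3 : ((q2 : ℕ) : ZMod (2 * q2)) = ((0 + q2 : ℕ) : ZMod (2 * q2)) := by norm_num
    rw [h3] at h1
    have h4 := cast_cancel_eq h1
    have h5 : xv q2 ((i.val + 1) % (2 * q2)) = 0 := by
      have := cast_eq_of_lt_inj (xv_lt (hrlt _)) (by omega) h4
      simpa using this
    have h6 : (i.val + 1) % (2 * q2) = 0 :=
      xv_inj (q2 := q2) (hrlt (i.val + 1)) (show (0:ℕ) < 2*q2 by omega)
        (by rw [h5, xv_zero])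
    have := (hIb i).1
    omega
  -- the cyclic sums
  set gh : ZMod m → ZMod (2 * q2) × H := fun i => gf (i - 1) + gf i with hgh
  -- boundary cases of the sum
  have hsumAB : ∀ i : ZMod m, i.val = 0 ∨ (i.val + 1) % (2 * q2) = 0 →
      gh i = (((q2 - 1 : ℕ) : ZMod (2 * q2)),
        c ((((i.val + 1) / (2 * q2) : ℕ) : ZMod h) - 1)
          + c (((i.val + 1) / (2 * q2) : ℕ) : ZMod h)) := by
    intro i hi
    rcases hi with hi | hi
    · -- wrap-around case
      have hv : (i - 1).val = m - 1 := val_sub_one_of_eq i hi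
      have hv1 : (i - 1).val + 1 = m := by
        have : 1 ≤ m := Nat.one_le_iff_ne_zero.mpr (NeZero.ne m)
        omega
      have hsplit : m = 2 * q2 * (h - 1) + (2 * q2 - 1) := by
        obtain ⟨h', rfl⟩ : ∃ h', h = h' + 1 := ⟨h - 1, by omega⟩
        simp only [Nat.add_sub_cancel]
        rw [hm, Nat.mul_succ]
        omega
      obtain ⟨hdiv, hmod⟩ := divmod (k := 2 * q2) (h - 1) (2 * q2 - 1)
        (by omega) (by omega)
      have hj1 : ((i - 1).val + 1) / (2 * q2) = h - 1 := by rw [hv1, hsplit]; exact hdiv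
      have hr1 : ((i - 1).val + 1) % (2 * q2) = 2 * q2 - 1 := by rw [hv1, hsplit]; exact hmod
      have hj2 : (i.val + 1) / (2 * q2) = 0 := by rw [hi]; exact Nat.div_eq_of_lt (by omega)
      have hr2 : (i.val + 1) % (2 * q2) = 1 := by rw [hi]; exact Nat.mod_eq_of_lt (by omega)
      have hhe : (h - 1) % 2 = 0 := by
        have := Nat.odd_iff.mp hh
        omega
      simp only [hgh, hgf, hj1, hr1, hj2, hr2, Prod.mk_add_mk, Prod.mk.injEq]
      constructor
      · rw [← Nat.cast_add, xv_last hq2, tv_even hhe, xv_one, tv_zero]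
        exact cast_drop (k := 2) (by omega)
      · rw [natCast_self_sub_one hh1]
        norm_num
    · -- block-boundary case
      have d1 := Nat.div_add_mod (i.val + 1) (2 * q2)
      rw [hi, Nat.add_zero] at d1
      have hIpos := (hIb i).1
      have hj1 : 1 ≤ (i.val + 1) / (2 * q2) := by
        rcases Nat.eq_zero_or_pos ((i.val + 1) / (2 * q2)) with h0 | h0
        · rw [h0, Nat.mul_zero] at d1; omega
        · exact h0
      have hiv : i.val ≠ 0 := by
        intro h0
        rw [h0] at d1
        have h5 : 2 * q2 ≤ 2 * q2 * ((0 + 1) / (2 * q2)) := by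
          calc 2 * q2 = 2 * q2 * 1 := by ring
          _ ≤ _ := Nat.mul_le_mul_left _ (by rw [h0] at hj1; exact hj1)
        omega
      have hv : (i - 1).val = i.val - 1 := val_sub_one_of_ne i hiv
      have hv1 : (i - 1).val + 1 = i.val := by omega
      have hsplit : i.val = 2 * q2 * ((i.val + 1) / (2 * q2) - 1) + (2 * q2 - 1) := by
        obtain ⟨j', hj'⟩ : ∃ j', (i.val + 1) / (2 * q2) = j' + 1 :=
          ⟨(i.val + 1) / (2 * q2) - 1, by omega⟩
        rw [hj', Nat.add_sub_cancel]
        rw [hj', Nat.mul_succ] at d1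
        omega
      obtain ⟨hdiv, hmod⟩ := divmod (k := 2 * q2) ((i.val + 1) / (2 * q2) - 1)
        (2 * q2 - 1) (by omega) (by omega)
      have hkey : (i - 1).val + 1 = 2 * q2 * ((i.val + 1) / (2 * q2) - 1)
          + (2 * q2 - 1) := by rw [hv1]; exact hsplit
      have hjp : ((i - 1).val + 1) / (2 * q2) = (i.val + 1) / (2 * q2) - 1 := by
        rw [hkey]; exact hdiv
      have hrp : ((i - 1).val + 1) % (2 * q2) = 2 * q2 - 1 := by
        rw [hkey]; exact hmod
      simp only [hgh, hgf, hjp, hrp, hi, Prod.mk_add_mk, Prod.mk.injEq]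
      constructor
      · rw [← Nat.cast_add, xv_last hq2, xv_zero]
        have ht := tv_sum (q2 := q2) hj1
        exact cast_drop (k := 1) (by omega)
      · rw [natCast_sub_one _ hj1]
  -- interior case of the sum
  have hsumC : ∀ i : ZMod m, i.val ≠ 0 → (i.val + 1) % (2 * q2) ≠ 0 →
      gh i = ((((i.val + 1) % (2 * q2) + q2 - 1 : ℕ) : ZMod (2 * q2)),
        c (((i.val + 1) / (2 * q2) : ℕ) : ZMod h)
          + c (((i.val + 1) / (2 * q2) : ℕ) : ZMod h)) := by
    intro i hiv hr
    have d1 := Nat.div_add_mod (i.val + 1) (2 * q2)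
    have hv : (i - 1).val = i.val - 1 := val_sub_one_of_ne i hiv
    have hv1 : (i - 1).val + 1 = i.val := by omega
    have hrpos : 1 ≤ (i.val + 1) % (2 * q2) := by omega
    have hsplit : i.val = 2 * q2 * ((i.val + 1) / (2 * q2))
        + ((i.val + 1) % (2 * q2) - 1) := by omega
    obtain ⟨hdiv, hmod⟩ := divmod (k := 2 * q2) ((i.val + 1) / (2 * q2))
      ((i.val + 1) % (2 * q2) - 1) (by omega) (by have := hrlt (i.val + 1); omega)
    have hkey : (i - 1).val + 1 = 2 * q2 * ((i.val + 1) / (2 * q2))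
        + ((i.val + 1) % (2 * q2) - 1) := by rw [hv1]; exact hsplit
    have hjp : ((i - 1).val + 1) / (2 * q2) = (i.val + 1) / (2 * q2) := by
      rw [hkey]; exact hdiv
    have hrp : ((i - 1).val + 1) % (2 * q2) = (i.val + 1) % (2 * q2) - 1 := by
      rw [hkey]; exact hmod
    simp only [hgh, hgf, hjp, hrp, Prod.mk_add_mk, Prod.mk.injEq]
    refine ⟨?_, trivial⟩
    rw [← Nat.cast_add]
    have hx := xv_sum (q2 := q2) hrpos
    rcases tv_double (q2 := q2) ((i.val + 1) / (2 * q2)) with ht | ht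
    · exact cast_drop (k := 0) (by omega)
    · exact cast_drop (k := 1) (by omega)
  -- the sums are injective
  have hghinj : Function.Injective gh := by
    intro i i' heq
    have hjr : ∀ a : ZMod m, ¬(a.val = 0 ∨ (a.val + 1) % (2 * q2) = 0) →
        a.val + 1 = 2 * q2 * ((a.val + 1) / (2 * q2)) + (a.val + 1) % (2 * q2) := by
      intro a _
      exact (Nat.div_add_mod _ _).symm
    by_cases hP : i.val = 0 ∨ (i.val + 1) % (2 * q2) = 0 <;>
      by_cases hP' : i'.val = 0 ∨ (i'.val + 1) % (2 * q2) = 0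
    · -- both boundary
      rw [hsumAB i hP, hsumAB i' hP'] at heq
      obtain ⟨h1, h2⟩ := Prod.ext_iff.mp heq
      have hj : (((i.val + 1) / (2 * q2) : ℕ) : ZMod h)
          = (((i'.val + 1) / (2 * q2) : ℕ) : ZMod h) :=
        hcs.injective (by simpa using h2)
      have hjv : (i.val + 1) / (2 * q2) = (i'.val + 1) / (2 * q2) :=
        cast_eq_of_lt_inj (hjlt i) (hjlt i') hj
      have hz : ∀ a : ZMod m, a.val = 0 → (a.val + 1) / (2 * q2) = 0 := by
        intro a ha
        rw [ha]
        exact Nat.div_eq_of_lt (by omega)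
      have hnz : ∀ a : ZMod m, (a.val + 1) % (2 * q2) = 0 →
          1 ≤ (a.val + 1) / (2 * q2) ∧ a.val + 1 = 2 * q2 * ((a.val + 1) / (2 * q2)) := by
        intro a ha
        have d1 := Nat.div_add_mod (a.val + 1) (2 * q2)
        rw [ha, Nat.add_zero] at d1
        have := (hIb a).1
        constructor
        · rcases Nat.eq_zero_or_pos ((a.val + 1) / (2 * q2)) with h0 | h0
          · rw [h0, Nat.mul_zero] at d1; omega
          · exact h0
        · omega
      rcases hP with hP | hP <;> rcases hP' with hP' | hP'
      · exact ZMod.val_injective _ (by rw [hP, hP'])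
      · exfalso
        have e1 := hz i hP
        have e2 := (hnz i' hP').1
        omega
      · exfalso
        have e1 := hz i' hP'
        have e2 := (hnz i hP).1
        omega
      · have e1 := (hnz i hP).2
        have e2 := (hnz i' hP').2
        rw [hjv] at e1
        exact ZMod.val_injective _ (by omega)
    · -- boundary vs interior : impossible
      exfalso
      push_neg at hP'
      rw [hsumAB i hP, hsumC i' hP'.1 hP'.2] at heq
      obtain ⟨h1, _⟩ := Prod.ext_iff.mp heq
      rw [show (q2 - 1 : ℕ) = 0 + (q2 - 1) from by omega,
        show ((i'.val + 1) % (2 * q2) + q2 - 1 : ℕ)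
          = (i'.val + 1) % (2 * q2) + (q2 - 1) from by omega] at h1
      have h3 := cast_cancel_eq h1
      have h4 := cast_eq_of_lt_inj (show (0:ℕ) < 2 * q2 by omega)
        (hrlt (i'.val + 1)) h3
      have := hrlt (i'.val + 1)
      exact hP'.2 (by omega)
    · -- interior vs boundary : impossible
      exfalso
      push_neg at hP
      rw [hsumC i hP.1 hP.2, hsumAB i' hP'] at heq
      obtain ⟨h1, _⟩ := Prod.ext_iff.mp heq
      rw [show (q2 - 1 : ℕ) = 0 + (q2 - 1) from by omega,
        show ((i.val + 1) % (2 * q2) + q2 - 1 : ℕ)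
          = (i.val + 1) % (2 * q2) + (q2 - 1) from by omega] at h1
      have h3 := cast_cancel_eq h1.symm
      have h4 := cast_eq_of_lt_inj (show (0:ℕ) < 2 * q2 by omega)
        (hrlt (i.val + 1)) h3
      exact hP.2 (by omega)
    · -- both interior
      push_neg at hP hP'
      rw [hsumC i hP.1 hP.2, hsumC i' hP'.1 hP'.2] at heq
      obtain ⟨h1, h2⟩ := Prod.ext_iff.mp heq
      rw [show ((i.val + 1) % (2 * q2) + q2 - 1 : ℕ)
          = (i.val + 1) % (2 * q2) + (q2 - 1) from by omega,
        show ((i'.val + 1) % (2 * q2) + q2 - 1 : ℕ)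
          = (i'.val + 1) % (2 * q2) + (q2 - 1) from by omega] at h1
      have h3 := cast_cancel_eq h1
      have hrv : (i.val + 1) % (2 * q2) = (i'.val + 1) % (2 * q2) :=
        cast_eq_of_lt_inj (hrlt _) (hrlt _) h3
      have h4 : c (((i.val + 1) / (2 * q2) : ℕ) : ZMod h)
          = c (((i'.val + 1) / (2 * q2) : ℕ) : ZMod h) :=
        two_nsmul_injective hoddH (by simpa using h2)
      have hjv : (i.val + 1) / (2 * q2) = (i'.val + 1) / (2 * q2) :=
        cast_eq_of_lt_inj (hjlt i) (hjlt i') (hc.injective h4)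
      have d1 := Nat.div_add_mod (i.val + 1) (2 * q2)
      have d2 := Nat.div_add_mod (i'.val + 1) (2 * q2)
      rw [hjv, hrv] at d1
      exact ZMod.val_injective _ (by omega)
  -- the sums avoid the forbidden value
  have hghne : ∀ i : ZMod m, gh i ≠ ((q2 : ZMod (2 * q2)), (0 : H)) := by
    intro i hbad
    by_cases hP : i.val = 0 ∨ (i.val + 1) % (2 * q2) = 0
    · rw [hsumAB i hP] at hbad
      obtain ⟨h1, _⟩ := Prod.ext_iff.mp hbad
      have := cast_eq_of_lt_inj (show q2 - 1 < 2 * q2 by omega)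
        (show q2 < 2 * q2 by omega) h1
      omega
    · push_neg at hP
      rw [hsumC i hP.1 hP.2] at hbad
      obtain ⟨h1, h2⟩ := Prod.ext_iff.mp hbad
      have h3 : c (((i.val + 1) / (2 * q2) : ℕ) : ZMod h) = 0 :=
        two_nsmul_injective hoddH (by simpa using h2)
      have hj0 : (i.val + 1) / (2 * q2) = 0 :=
        cast_eq_of_lt_inj (hjlt i) (by omega)
          (by simpa using hczero _ h3)
      have d1 := Nat.div_add_mod (i.val + 1) (2 * q2)
      rw [hj0, Nat.mul_zero] at d1
      have hr2 : 2 ≤ (i.val + 1) % (2 * q2) := by omega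
      rw [show ((i.val + 1) % (2 * q2) + q2 - 1 : ℕ)
          = ((i.val + 1) % (2 * q2) - 1) + q2 from by omega,
        show (q2 : ZMod (2 * q2)) = ((0 + q2 : ℕ) : ZMod (2 * q2)) from by norm_num] at h1
      have h4 := cast_cancel_eq h1
      have h5 := cast_eq_of_lt_inj (show (i.val + 1) % (2 * q2) - 1 < 2 * q2
        from by have := hrlt (i.val + 1); omega) (show (0:ℕ) < 2 * q2 by omega) h4
      omega
  -- ranges via cardinality
  have hcardZ : Nat.card (ZMod m) = m := by rw [Nat.card_eq_fintype_card, ZMod.card]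
  have hrange : ∀ f : ZMod m → ZMod (2 * q2) × H, Function.Injective f →
      (∀ i, f i ≠ ((q2 : ZMod (2 * q2)), (0 : H))) →
      Set.range f = {x : ZMod (2 * q2) × H | x ≠ ((q2 : ZMod (2 * q2)), (0 : H))} := by
    intro f hf hne
    refine Set.eq_of_subset_of_ncard_le ?_ ?_ (Set.toFinite _)
    · rintro x ⟨i, rfl⟩
      exact hne i
    · have h1 : {x : ZMod (2 * q2) × H | x ≠ ((q2 : ZMod (2 * q2)), (0 : H))}
          = ({((q2 : ZMod (2 * q2)), (0 : H))} : Set _)ᶜ := by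
        ext x; simp
      have h2 := Set.ncard_add_ncard_compl
        ({((q2 : ZMod (2 * q2)), (0 : H))} : Set (ZMod (2 * q2) × H))
      rw [Set.ncard_singleton, Nat.card_eq_fintype_card,
        Fintype.card_prod, ZMod.card, hcard] at h2
      have hr1 : (Set.range f).ncard = m := by
        rw [← Set.image_univ, Set.ncard_image_of_injective _ hf, Set.ncard_univ, hcardZ]
      have hr2 : ({x : ZMod (2 * q2) × H | x ≠ ((q2 : ZMod (2 * q2)), (0 : H))}).ncard
          = m := by
        rw [h1]; omega
      rw [hr1, hr2]
  exact ⟨gf, hginj, hrange gf hginj hgne, hghinj, hrange gh hghinj hghne⟩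


end FH

open FH

/-- **`G ∖ {ι}` is harmonious for abelian `G` with a unique involution `ι`.**
If `G` is a finite abelian group with a unique element `ι` of order 2, then
there is a sequence `g` of length `|G| - 1` (indexed cyclically, with cyclic
consecutive sums `ĝ i = g (i - 1) + g i`) listing each element of `G ∖ {ι}`
exactly once, whose cyclic consecutive sums also list each element of
`G ∖ {ι}` exactly once. -/
theorem flat_harmonious_of_unique_involution
    (G : Type*) [AddCommGroup G] [Fintype G] (ι : G)
    (hι : addOrderOf ι = 2) (huniq : ∀ x : G, addOrderOf x = 2 → x = ι) :
    ∃ g : ZMod (Fintype.card G - 1) → G,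
      Function.Injective g ∧
      Set.range g = {x : G | x ≠ ι} ∧
      Function.Injective (fun i : ZMod (Fintype.card G - 1) => g (i - 1) + g i) ∧
      Set.range (fun i : ZMod (Fintype.card G - 1) => g (i - 1) + g i) = {x : G | x ≠ ι} := by
  classical
  obtain ⟨κ, fκ, nf, hnf, ⟨e0⟩⟩ := AddCommGroup.equiv_directSum_zmod_of_finite' G
  haveI := fκ
  haveI : ∀ i : κ, NeZero (nf i) := fun i => ⟨by have := hnf i; omega⟩
  have e' : G ≃+ ∀ i, ZMod (nf i) := e0.trans (DirectSum.addEquivProd _)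
  haveI : Fact (Nat.Prime 2) := ⟨Nat.prime_two⟩
  -- existence of an even index
  have hdvdcard : (2 : ℕ) ∣ Fintype.card G := hι ▸ addOrderOf_dvd_card
  have hcardG : Fintype.card G = ∏ i, nf i := by
    rw [Fintype.card_congr e'.toEquiv, Fintype.card_pi]
    exact Finset.prod_congr rfl fun i _ => ZMod.card _
  obtain ⟨i₀, -, hi₀⟩ :=
    (Nat.prime_two.prime.dvd_finset_prod_iff nf).mp (hcardG ▸ hdvdcard)
  -- split off the even factor
  set K : Type _ := ∀ j : {j : κ // j ≠ i₀}, ZMod (nf j.val) with hKdef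
  haveI : Fintype K := by unfold K; infer_instance
  set q2 : ℕ := nf i₀ / 2 with hq2def
  have hq2 : 1 ≤ q2 := by
    have := hnf i₀
    obtain ⟨w, hw⟩ := hi₀
    omega
  have hqeq : nf i₀ = 2 * q2 := by
    obtain ⟨w, hw⟩ := hi₀
    omega
  have e2 : G ≃+ ZMod (nf i₀) × K := e'.trans (piSplitAddEquiv i₀ _)
  rw [hqeq] at e2
  haveI : NeZero (2 * q2) := ⟨by omega⟩
  set v : ZMod (2 * q2) × K := ((q2 : ZMod (2 * q2)), (0 : K)) with hvdef
  have hq2ne : ((q2 : ℕ) : ZMod (2 * q2)) ≠ 0 := by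
    intro hbad
    have := congrArg ZMod.val hbad
    rw [ZMod.val_natCast_of_lt (by omega), ZMod.val_zero] at this
    omega
  -- identify the involution
  have hvorder : addOrderOf (e2.symm v) = 2 := by
    rw [AddEquiv.addOrderOf_eq]
    apply addOrderOf_eq_prime
    · rw [two_nsmul, hvdef, Prod.mk_add_mk, add_zero, ← Nat.cast_add,
        show q2 + q2 = 2 * q2 from by ring, ZMod.natCast_self]
      rfl
    · intro hbad
      rw [hvdef, Prod.mk_eq_zero] at hbad
      exact hq2ne hbad.1
  have hvι : e2.symm v = ι := huniq _ hvorder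
  -- the odd part
  have hoddK : Odd (Fintype.card K) := by
    rw [Nat.odd_iff]
    rcases Nat.mod_two_eq_zero_or_one (Fintype.card K) with h0 | h1
    · exfalso
      obtain ⟨y, hy⟩ := exists_prime_addOrderOf_dvd_card (G := K) 2 (by omega)
      have hy2 : y + y = 0 := by
        have := addOrderOf_nsmul_eq_zero y
        rwa [hy, two_nsmul] at this
      have hyne : y ≠ 0 := by
        intro h0'
        rw [h0', addOrderOf_zero] at hy
        omega
      have horder : addOrderOf (e2.symm ((0 : ZMod (2 * q2)), y)) = 2 := by
        rw [AddEquiv.addOrderOf_eq]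
        apply addOrderOf_eq_prime
        · rw [two_nsmul, Prod.mk_add_mk, add_zero, hy2]
          rfl
        · intro hbad
          rw [Prod.mk_eq_zero] at hbad
          exact hyne hbad.2
      have hh1 := huniq _ horder
      rw [← hvι] at hh1
      have := e2.symm.injective hh1
      rw [hvdef, Prod.mk.injEq] at this
      exact hq2ne this.1.symm
    · exact h1
  obtain ⟨g₀, hg1, hg2, hg3, hg4⟩ :=
    main_construct q2 (Fintype.card K) hq2 hoddK K rfl (hseq_odd K hoddK)
  -- cardinality
  have hcardG2 : Fintype.card G = 2 * q2 * Fintype.card K := by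
    rw [Fintype.card_congr e2.toEquiv, Fintype.card_prod, ZMod.card]
  rw [hcardG2]
  refine ⟨fun i => e2.symm (g₀ i), ?_, ?_, ?_, ?_⟩
  · exact fun a b hab => hg1 (e2.symm.injective hab)
  · ext x
    simp only [Set.mem_range, Set.mem_setOf_eq]
    constructor
    · rintro ⟨i, rfl⟩ h0
      have hmem : g₀ i ∈ Set.range g₀ := Set.mem_range_self i
      rw [hg2] at hmem
      exact hmem (e2.symm.injective (by rw [h0, hvι]))
    · intro hx
      have hne : e2 x ∈ {y : ZMod (2 * q2) × K | y ≠ v} := by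
        intro h0
        apply hx
        rw [← hvι, ← h0]
        exact (e2.symm_apply_apply x).symm
      rw [← hg2] at hne
      obtain ⟨i, hi⟩ := hne
      exact ⟨i, by rw [hi, e2.symm_apply_apply]⟩
  · have hfun : (fun i : ZMod (2 * q2 * Fintype.card K - 1) =>
        e2.symm (g₀ (i - 1)) + e2.symm (g₀ i))
        = fun i => e2.symm (g₀ (i - 1) + g₀ i) := by
      funext i; rw [map_add]
    simp only [hfun]
    exact fun a b hab => hg3 (e2.symm.injective hab)
  · have hfun : (fun i : ZMod (2 * q2 * Fintype.card K - 1) =>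
        e2.symm (g₀ (i - 1)) + e2.symm (g₀ i))
        = fun i => e2.symm (g₀ (i - 1) + g₀ i) := by
      funext i; rw [map_add]
    simp only [hfun]
    ext x
    simp only [Set.mem_range, Set.mem_setOf_eq]
    constructor
    · rintro ⟨i, rfl⟩ h0
      have hmem : g₀ (i - 1) + g₀ i ∈ Set.range (fun i => g₀ (i - 1) + g₀ i) :=
        Set.mem_range_self i
      rw [hg4] at hmem
      exact hmem (e2.symm.injective (by rw [h0, hvι]))
    · intro hx
      have hne : e2 x ∈ {y : ZMod (2 * q2) × K | y ≠ v} := by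
        intro h0
        apply hx
        rw [← hvι, ← h0]
        exact (e2.symm_apply_apply x).symm
      rw [← hg4] at hne
      obtain ⟨i, hi⟩ := hne
      exact ⟨i, by simp only at hi; rw [hi, e2.symm_apply_apply]⟩
end

section
/- Let n be an integer with n ≥ 3 and let G = ℤ_{4n}. Then there exists a sequence x_0, x_1, …, x_{4n-1} listing each element of ℤ_{4n} exactly once such that: (i) the set {x̂_0 + 2n} ∪ {x̂_1, x̂_2, …, x̂_{4n-1}} equals all of ℤ_{4n}, where x̂_0 = x_{4n-1} + x_0 and x̂_i = x_{i-1} + x_i for 1 ≤ i ≤ 4n-1; (ii) x_0 + 2n = 2; and (iii) x_{4n-1} = 2n + 1. -/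
private def seqx (n : ℕ) (i : ZMod (4 * n)) : ZMod (4 * n) :=
  if ZMod.val i % 2 = 0 then ((ZMod.val i / 2 + (2 * n + 2) : ℕ) : ZMod (4 * n))
  else ((ZMod.val i / 2 + 2 : ℕ) : ZMod (4 * n))

private lemma modeq_cancel {M a b : ℕ} (h : a ≡ b [MOD M]) (h1 : a < b + M) (h2 : b < a + M) :
    a = b := by
  rcases le_total a b with hle | hle
  · have hd := (Nat.modEq_iff_dvd' hle).mp h
    have := Nat.eq_zero_of_dvd_of_lt hd (by omega)
    omega
  · have hd := (Nat.modEq_iff_dvd' hle).mp h.symm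
    have := Nat.eq_zero_of_dvd_of_lt hd (by omega)
    omega

private lemma cast_eq_of_delta {M a b : ℕ} (h : b = a ∨ b = a + M) :
    ((a : ZMod M)) = ((b : ZMod M)) := by
  rcases h with h | h <;> subst h
  · rfl
  · push_cast [ZMod.natCast_self]
    ring

private lemma seqx_cast (n : ℕ) (hn : 0 < n) (c : ℕ) (hc : c < 4 * n) :
    seqx n (c : ZMod (4 * n)) =
      if c % 2 = 0 then ((c / 2 + (2 * n + 2) : ℕ) : ZMod (4 * n))
      else ((c / 2 + 2 : ℕ) : ZMod (4 * n)) := by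
  haveI : NeZero (4 * n) := ⟨by omega⟩
  simp [seqx, ZMod.val_cast_of_lt hc]

private lemma seqx_inj (n : ℕ) (hn : 0 < n) : Function.Injective (seqx n) := by
  haveI : NeZero (4 * n) := ⟨by omega⟩
  intro i j h
  have hi : i.val < 4 * n := ZMod.val_lt i
  have hj : j.val < 4 * n := ZMod.val_lt j
  apply ZMod.val_injective
  unfold seqx at h
  split_ifs at h with h1 h2 h2 <;>
    rw [ZMod.natCast_eq_natCast_iff] at h <;>
    have := modeq_cancel h (by omega) (by omega) <;>
    omega

/-- **A near-complete-mapping permutation of `ℤ_{4n}` for `n ≥ 3`.**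
There is a permutation `x` of `ℤ_{4n}` (indexed cyclically by `ZMod (4n)`,
with cyclic consecutive sums `x̂ i = x (i - 1) + x i`, so `x̂ 0 = x (-1) + x 0`)
such that (i) the set `{x̂ 0 + 2n} ∪ {x̂ i : i ≠ 0}` is all of `ℤ_{4n}`,
(ii) `x 0 + 2n = 2`, and (iii) `x (-1) = 2n + 1` (the last term). -/
theorem exists_near_complete_permutation_zmod (n : ℕ) (hn : 3 ≤ n) :
    ∃ x : ZMod (4 * n) → ZMod (4 * n),
      Function.Bijective x ∧
      {y : ZMod (4 * n) | y = x (-1) + x 0 + ((2 * n : ℕ) : ZMod (4 * n)) ∨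
        ∃ i : ZMod (4 * n), i ≠ 0 ∧ y = x (i - 1) + x i} = Set.univ ∧
      x 0 + ((2 * n : ℕ) : ZMod (4 * n)) = 2 ∧
      x (-1) = ((2 * n + 1 : ℕ) : ZMod (4 * n)) := by
  haveI : NeZero (4 * n) := ⟨by omega⟩
  have hneg1 : (-1 : ZMod (4 * n)) = ((4 * n - 1 : ℕ) : ZMod (4 * n)) := by
    rw [Nat.cast_sub (by omega)]
    simp [ZMod.natCast_self]
  have hx0 : seqx n 0 = ((2 * n + 2 : ℕ) : ZMod (4 * n)) := by
    have := seqx_cast n (by omega) 0 (by omega)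
    simpa using this
  have hxneg1 : seqx n (-1) = ((2 * n + 1 : ℕ) : ZMod (4 * n)) := by
    rw [hneg1, seqx_cast n (by omega) (4 * n - 1) (by omega),
      if_neg (by omega : ¬ (4 * n - 1) % 2 = 0)]
    congr 1
    omega
  refine ⟨seqx n, Finite.injective_iff_bijective.mp (seqx_inj n (by omega)), ?_, ?_, ?_⟩
  · apply Set.eq_univ_of_forall
    intro y
    have hm : y.val < 4 * n := ZMod.val_lt y
    have hy : ((y.val : ℕ) : ZMod (4 * n)) = y := ZMod.natCast_zmod_val y
    set m := y.val with hmdef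
    simp only [Set.mem_setOf_eq]
    by_cases hpar : m % 2 = 0
    · -- even values: witness i = 2k+1
      right
      obtain ⟨k, hk1, hk2⟩ : ∃ k, k < 2 * n ∧ (2 * k + 2 * n + 4 = m ∨ 2 * k + 2 * n + 4 = m + 4 * n) := by
        rcases lt_or_ge (m / 2) (n + 2) with hc | hc
        · exact ⟨m / 2 + n - 2, by omega, by omega⟩
        · exact ⟨m / 2 - n - 2, by omega, by omega⟩
      refine ⟨((2 * k + 1 : ℕ) : ZMod (4 * n)), ?_, ?_⟩
      · intro h0
        apply_fun ZMod.val at h0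
        rw [ZMod.val_cast_of_lt (by omega), ZMod.val_zero] at h0
        omega
      · have hi1 : ((2 * k + 1 : ℕ) : ZMod (4 * n)) - 1 = ((2 * k : ℕ) : ZMod (4 * n)) := by
          push_cast; ring
        rw [hi1, seqx_cast n (by omega) (2 * k) (by omega),
          seqx_cast n (by omega) (2 * k + 1) (by omega),
          if_pos (by omega : (2 * k) % 2 = 0), if_neg (by omega : ¬ (2 * k + 1) % 2 = 0)]
        rw [← hy, ← Nat.cast_add]
        exact cast_eq_of_delta (by omega)
    · -- odd values
      by_cases hsp : m = 2 * n + 3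
      · left
        rw [hx0, hxneg1, ← hy, hsp, ← Nat.cast_add, ← Nat.cast_add]
        exact cast_eq_of_delta (by omega)
      · right
        obtain ⟨k, hk0, hk1, hk2⟩ : ∃ k, 1 ≤ k ∧ k < 2 * n ∧
            (2 * k + 2 * n + 3 = m ∨ 2 * k + 2 * n + 3 = m + 4 * n) := by
          rcases lt_or_ge m (2 * n + 3) with hc | hc
          · exact ⟨(m + 2 * n - 3) / 2, by omega, by omega, by omega⟩
          · exact ⟨(m - 2 * n - 3) / 2, by omega, by omega, by omega⟩
        refine ⟨((2 * k : ℕ) : ZMod (4 * n)), ?_, ?_⟩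
        · intro h0
          apply_fun ZMod.val at h0
          rw [ZMod.val_cast_of_lt (by omega), ZMod.val_zero] at h0
          omega
        · have hi1 : ((2 * k : ℕ) : ZMod (4 * n)) - 1 = ((2 * k - 1 : ℕ) : ZMod (4 * n)) := by
            rw [Nat.cast_sub (by omega)]; push_cast; ring
          rw [hi1, seqx_cast n (by omega) (2 * k - 1) (by omega),
            seqx_cast n (by omega) (2 * k) (by omega),
            if_pos (by omega : (2 * k) % 2 = 0), if_neg (by omega : ¬ (2 * k - 1) % 2 = 0)]
          rw [← hy, ← Nat.cast_add]
          apply cast_eq_of_delta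
          omega
  · rw [hx0, ← Nat.cast_add]
    have : (2 * n + 2 + 2 * n) = 2 + 4 * n := by ring
    rw [this, Nat.cast_add, ZMod.natCast_self, add_zero, Nat.cast_ofNat]
  · exact hxneg1
end
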